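/- arXiv:1201.0533 — 4 statements merged into one kernel-verified Lean document; each statement's English description precedes it below -/
import Mathlib

section
/- Let {X_k, F_k}_{k≥0} be a discrete-time real-valued conditionally symmetric martingale. Assume that for some fixed numbers d, σ > 0, almost surely |X_k − X_{k−1}| ≤ d and E[(X_k − X_{k−1})² | F_{k−1}] ≤ σ² for every k ≥ 1. Set γ = σ²/d² and δ = α/d. Then for every α ≥ 0 with δ ∈ [0,1) and every n ≥ 1, P( max_{1≤k≤n} |X_k − X_0| ≥ αn ) ≤ 2 exp(−n E(γ,δ)). -/
/-
By conditional symmetry, `E[exp (λ ξ) | F] = E[cosh (λ ξ) | F]` for every jump `ξ`. Since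
`cosh ≥ 1`, this is at least `1`, so `exp (λ (X k - X 0))` is a nonnegative submartingale; since
`cosh (λ t) - 1 ≤ (t / d)² (cosh (λ d) - 1)` for `|t| ≤ d`, it is at most
`β = 1 + γ (cosh (λ d) - 1)`, so the submartingale has mean at most `β ^ n` at time `n`.
Doob's maximal inequality for `λ` and `-λ` bounds the probability by `2 exp (-|λ| α n) β ^ n`,
and `λ = x / d` with the `x` of the statement turns this into `2 exp (-n E(γ, δ))`.
-/

open MeasureTheory ProbabilityTheory Filter Set

/-- The exponent `E(γ, δ)` from the paper: `E(γ,δ) = δ x − ln(1 + γ(cosh x − 1))` where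
`x = ln( (δ(1−γ) + √(δ²(1−γ)² + γ²(1−δ²))) / (γ(1−δ)) )`. -/
noncomputable def Eexp (γ δ : ℝ) : ℝ :=
  δ * Real.log ((δ * (1 - γ) + Real.sqrt (δ ^ 2 * (1 - γ) ^ 2 + γ ^ 2 * (1 - δ ^ 2)))
      / (γ * (1 - δ)))
    - Real.log (1 + γ *
        (Real.cosh (Real.log ((δ * (1 - γ)
            + Real.sqrt (δ ^ 2 * (1 - γ) ^ 2 + γ ^ 2 * (1 - δ ^ 2))) / (γ * (1 - δ)))) - 1))

open Real

namespace Real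

open scoped Nat

-- Termwise comparison of the power series: `u ^ (2 * k) ≤ u ^ 2` for `k ≥ 1`.
lemma cosh_mul_le {u : ℝ} (hu : |u| ≤ 1) (y : ℝ) :
    cosh (u * y) ≤ 1 + u ^ 2 * (cosh y - 1) := by
  have hseries := (hasSum_cosh (u * y)).sub ((hasSum_cosh y).mul_left (u ^ 2))
  have hle := hasSum_le (fun k => ?_) hseries (hasSum_ite_eq 0 (1 - u ^ 2))
  · linarith
  rcases Nat.eq_zero_or_pos k with rfl | hk
  · simp
  have hu2 : u ^ (2 * k) ≤ u ^ 2 := by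
    rw [pow_mul]
    exact pow_le_of_le_one (sq_nonneg u) (by nlinarith [sq_abs u, abs_nonneg u]) hk.ne'
  have hterm : 0 ≤ y ^ (2 * k) / (2 * k)! := by rw [pow_mul]; positivity
  rw [if_neg hk.ne', mul_pow, mul_div_assoc, ← sub_mul]
  exact mul_nonpos_of_nonpos_of_nonneg (by linarith) hterm

end Real

section OneStep

variable {Ω : Type*} {m m0 : MeasurableSpace Ω} {μ : Measure Ω} {ξ : Ω → ℝ} {c : ℝ}

lemma cosh_mul_comp_eq_smul (ξ : Ω → ℝ) (c : ℝ) : (fun ω => cosh (c * ξ ω))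
    = (2 : ℝ)⁻¹ • ((fun ω => exp (c * ξ ω)) + fun ω => exp (-c * ξ ω)) := by
  ext ω
  simp only [Pi.smul_apply, Pi.add_apply, smul_eq_mul, cosh_eq, neg_mul]
  ring

lemma condExp_exp_mul_ae_eq_condExp_cosh
    (hpos : Integrable (fun ω => exp (c * ξ ω)) μ) (hneg : Integrable (fun ω => exp (-c * ξ ω)) μ)
    (hsymm : μ[fun ω => exp (c * ξ ω) | m] =ᵐ[μ] μ[fun ω => exp (-c * ξ ω) | m]) :
    μ[fun ω => exp (c * ξ ω) | m] =ᵐ[μ] μ[fun ω => cosh (c * ξ ω) | m] := by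
  rw [cosh_mul_comp_eq_smul]
  filter_upwards [condExp_smul (m := m) (μ := μ) (2 : ℝ)⁻¹
      ((fun ω => exp (c * ξ ω)) + fun ω => exp (-c * ξ ω)), condExp_add hpos hneg m, hsymm]
    with ω hsmul hadd hω
  rw [hsmul, Pi.smul_apply, hadd, Pi.add_apply, ← hω, smul_eq_mul]
  ring

variable [IsFiniteMeasure μ] {d : ℝ} (hξ : AEMeasurable ξ μ) (hb : ∀ᵐ ω ∂μ, |ξ ω| ≤ d)
include hξ hb

lemma integrable_exp_mul_of_abs_le (c : ℝ) :
    Integrable (fun ω => exp (c * ξ ω)) μ :=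
  integrable_exp_mul_of_mem_Icc hξ (by filter_upwards [hb] with ω h using abs_le.mp h)

lemma integrable_cosh_mul_of_abs_le (c : ℝ) :
    Integrable (fun ω => cosh (c * ξ ω)) μ := by
  rw [cosh_mul_comp_eq_smul]
  exact ((integrable_exp_mul_of_abs_le hξ hb c).add
    (integrable_exp_mul_of_abs_le hξ hb (-c))).smul _

lemma one_le_condExp_exp_mul (hm : m ≤ m0)
    (hsymm : μ[fun ω => exp (c * ξ ω) | m] =ᵐ[μ] μ[fun ω => exp (-c * ξ ω) | m]) :
    1 ≤ᵐ[μ] μ[fun ω => exp (c * ξ ω) | m] := by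
  have hmono := condExp_mono (m := m) (integrable_const 1) (integrable_cosh_mul_of_abs_le hξ hb c)
    (ae_of_all μ fun ω => one_le_cosh (c * ξ ω))
  rw [condExp_const hm] at hmono
  filter_upwards [hmono, condExp_exp_mul_ae_eq_condExp_cosh (integrable_exp_mul_of_abs_le hξ hb c)
    (integrable_exp_mul_of_abs_le hξ hb (-c)) hsymm] with ω h1 h2
  exact h2 ▸ h1

lemma condExp_exp_mul_le (hm : m ≤ m0) (hd : 0 < d)
    (hsymm : μ[fun ω => exp (c * ξ ω) | m] =ᵐ[μ] μ[fun ω => exp (-c * ξ ω) | m])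
    {σ : ℝ} (hvar : ∀ᵐ ω ∂μ, μ[fun ω => ξ ω ^ 2 | m] ω ≤ σ ^ 2) :
    μ[fun ω => exp (c * ξ ω) | m] ≤ᵐ[μ] fun _ => 1 + σ ^ 2 / d ^ 2 * (cosh (c * d) - 1) := by
  set C := (cosh (c * d) - 1) / d ^ 2
  have hC : 0 ≤ C := div_nonneg (sub_nonneg.mpr (one_le_cosh _)) (sq_nonneg d)
  have hsq : Integrable (fun ω => ξ ω ^ 2) μ := by
    refine .of_bound (hξ.pow_const 2).aestronglyMeasurable (d ^ 2) ?_
    filter_upwards [hb] with ω h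
    rw [Real.norm_eq_abs, abs_pow]
    exact pow_le_pow_left₀ (abs_nonneg _) h 2
  have hpt : (fun ω => cosh (c * ξ ω)) ≤ᵐ[μ] (fun _ => 1) + C • fun ω => ξ ω ^ 2 := by
    filter_upwards [hb] with ω h
    have hu : |ξ ω / d| ≤ 1 := by rwa [abs_div, abs_of_pos hd, div_le_one hd]
    have hcosh := cosh_mul_le hu (c * d)
    rw [show ξ ω / d * (c * d) = c * ξ ω by field_simp, div_pow] at hcosh
    simp only [Pi.add_apply, Pi.smul_apply, smul_eq_mul, C]
    exact hcosh.trans_eq (by ring)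
  have hmono := condExp_mono (m := m) (integrable_cosh_mul_of_abs_le hξ hb c)
    ((integrable_const 1).add (hsq.smul C)) hpt
  filter_upwards [hmono, condExp_add (m := m) (integrable_const (1 : ℝ)) (hsq.smul C),
    condExp_smul (m := m) (μ := μ) C (fun ω => ξ ω ^ 2), hvar,
    condExp_exp_mul_ae_eq_condExp_cosh (integrable_exp_mul_of_abs_le hξ hb c)
    (integrable_exp_mul_of_abs_le hξ hb (-c)) hsymm] with ω hmono hadd hsmul hvar hcosh
  rw [hadd, Pi.add_apply, hsmul, condExp_const hm, Pi.smul_apply, smul_eq_mul] at hmono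
  rw [hcosh]
  calc _ ≤ 1 + C * μ[fun ω => ξ ω ^ 2 | m] ω := hmono
    _ ≤ 1 + C * σ ^ 2 := by gcongr
    _ = _ := by ring

end OneStep

section ExponentialProcess

variable {Ω : Type*} {m0 : MeasurableSpace Ω} {μ : Measure Ω} {F : Filtration ℕ m0}
  {X : ℕ → Ω → ℝ} {d : ℝ}

lemma ae_abs_sub_zero_le (hb : ∀ k, ∀ᵐ ω ∂μ, |X (k + 1) ω - X k ω| ≤ d) (k : ℕ) :
    ∀ᵐ ω ∂μ, |X k ω - X 0 ω| ≤ k * d := by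
  induction k with
  | zero => simp
  | succ k ih =>
    filter_upwards [ih, hb k] with ω hk hjump
    calc |X (k + 1) ω - X 0 ω| = |(X (k + 1) ω - X k ω) + (X k ω - X 0 ω)| := by ring_nf
      _ ≤ |X (k + 1) ω - X k ω| + |X k ω - X 0 ω| := abs_add_le _ _
      _ ≤ d + k * d := add_le_add hjump hk
      _ = (k + 1 : ℕ) * d := by push_cast; ring

variable [IsFiniteMeasure μ] (hX : StronglyAdapted F X)
  (hb : ∀ k, ∀ᵐ ω ∂μ, |X (k + 1) ω - X k ω| ≤ d)
include hX hb

lemma integrable_exp_mul_sub_zero (c : ℝ) (k : ℕ) :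
    Integrable (fun ω => exp (c * (X k ω - X 0 ω))) μ :=
  integrable_exp_mul_of_abs_le (hX.stronglyMeasurable.sub hX.stronglyMeasurable).aemeasurable
    (ae_abs_sub_zero_le hb k) c

lemma integrable_exp_mul_sub_succ (c : ℝ) (k : ℕ) :
    Integrable (fun ω => exp (c * (X (k + 1) ω - X k ω))) μ :=
  integrable_exp_mul_of_abs_le (hX.stronglyMeasurable.sub hX.stronglyMeasurable).aemeasurable
    (hb k) c

omit hb in
lemma stronglyAdapted_exp_mul_sub_zero (c : ℝ) :
    StronglyAdapted F fun k ω => exp (c * (X k ω - X 0 ω)) := fun k =>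
  continuous_exp.comp_stronglyMeasurable
    (((hX k).sub (hX.stronglyMeasurable_le k.zero_le)).const_mul c)

lemma condExp_exp_mul_sub_zero_succ (c : ℝ) (k : ℕ) :
    μ[fun ω => exp (c * (X (k + 1) ω - X 0 ω)) | F k] =ᵐ[μ]
      fun ω => exp (c * (X k ω - X 0 ω)) * μ[fun ω => exp (c * (X (k + 1) ω - X k ω)) | F k] ω := by
  have hprod : (fun ω => exp (c * (X (k + 1) ω - X 0 ω))) =
      (fun ω => exp (c * (X k ω - X 0 ω))) * fun ω => exp (c * (X (k + 1) ω - X k ω)) := by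
    ext ω
    rw [Pi.mul_apply, ← exp_add]
    ring_nf
  rw [hprod]
  exact condExp_mul_of_stronglyMeasurable_left (stronglyAdapted_exp_mul_sub_zero hX c k)
    (hprod ▸ integrable_exp_mul_sub_zero hX hb c (k + 1)) (integrable_exp_mul_sub_succ hX hb c k)

lemma submartingale_exp_mul_sub_zero {c : ℝ}
    (hlow : ∀ k, 1 ≤ᵐ[μ] μ[fun ω => exp (c * (X (k + 1) ω - X k ω)) | F k]) :
    Submartingale (fun k ω => exp (c * (X k ω - X 0 ω))) F μ := by
  refine submartingale_nat (stronglyAdapted_exp_mul_sub_zero hX c)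
    (integrable_exp_mul_sub_zero hX hb c) fun k => ?_
  filter_upwards [condExp_exp_mul_sub_zero_succ hX hb c k, hlow k] with ω hpull hone
  rw [hpull]
  exact le_mul_of_one_le_right (exp_nonneg _) hone

omit [IsFiniteMeasure μ] in
lemma integral_exp_mul_sub_zero_le_pow [IsProbabilityMeasure μ] {c β : ℝ} (hβ : 0 ≤ β)
    (hup : ∀ k, μ[fun ω => exp (c * (X (k + 1) ω - X k ω)) | F k] ≤ᵐ[μ] fun _ => β) (n : ℕ) :
    ∫ ω, exp (c * (X n ω - X 0 ω)) ∂μ ≤ β ^ n := by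
  induction n with
  | zero => simp
  | succ k ih =>
    have hstep : μ[fun ω => exp (c * (X (k + 1) ω - X 0 ω)) | F k] ≤ᵐ[μ]
        fun ω => β * exp (c * (X k ω - X 0 ω)) := by
      filter_upwards [condExp_exp_mul_sub_zero_succ hX hb c k, hup k] with ω hpull hβω
      rw [hpull, mul_comm β]
      exact mul_le_mul_of_nonneg_left hβω (exp_nonneg _)
    calc ∫ ω, exp (c * (X (k + 1) ω - X 0 ω)) ∂μ
        = ∫ ω, μ[fun ω => exp (c * (X (k + 1) ω - X 0 ω)) | F k] ω ∂μ :=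
          (integral_condExp (F.le k)).symm
      _ ≤ ∫ ω, β * exp (c * (X k ω - X 0 ω)) ∂μ :=
          integral_mono_ae integrable_condExp ((integrable_exp_mul_sub_zero hX hb c k).const_mul β)
            hstep
      _ = β * ∫ ω, exp (c * (X k ω - X 0 ω)) ∂μ := integral_const_mul β _
      _ ≤ β ^ (k + 1) := by rw [pow_succ']; exact mul_le_mul_of_nonneg_left ih hβ

end ExponentialProcess

section Chernoff

variable {Ω : Type*} {m0 : MeasurableSpace Ω} {μ : Measure Ω} {F : Filtration ℕ m0}

lemma MeasureTheory.Submartingale.measure_le_sup'_le [IsFiniteMeasure μ] {f : ℕ → Ω → ℝ}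
    (hf : Submartingale f F μ) (hnonneg : 0 ≤ f) {ε : ℝ} (hε : 0 < ε) (n : ℕ) :
    μ {ω | ε ≤ (Finset.range (n + 1)).sup' Finset.nonempty_range_add_one fun k => f k ω}
      ≤ ENNReal.ofReal ((∫ ω, f n ω ∂μ) / ε) := by
  have hdoob := maximal_ineq hf hnonneg (ε := ε.toNNReal) n
  rw [Real.coe_toNNReal _ hε.le] at hdoob
  rw [ENNReal.ofReal_div_of_pos hε, ENNReal.le_div_iff_mul_le (by simp [hε]) (by simp), mul_comm]
  exact hdoob.trans (ENNReal.ofReal_le_ofReal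
    (setIntegral_le_integral (hf.integrable n) (ae_of_all μ fun ω => hnonneg n ω)))

variable [IsProbabilityMeasure μ] {X : ℕ → Ω → ℝ} {d : ℝ}
  (hX : StronglyAdapted F X) (hb : ∀ k, ∀ᵐ ω ∂μ, |X (k + 1) ω - X k ω| ≤ d)
include hX hb

lemma measure_exists_le_mul_sub_zero_le {c β : ℝ}
    (hlow : ∀ k, 1 ≤ᵐ[μ] μ[fun ω => exp (c * (X (k + 1) ω - X k ω)) | F k])
    (hup : ∀ k, μ[fun ω => exp (c * (X (k + 1) ω - X k ω)) | F k] ≤ᵐ[μ] fun _ => β)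
    (hβ : 0 ≤ β) (t : ℝ) (n : ℕ) :
    μ {ω | ∃ k ≤ n, t ≤ c * (X k ω - X 0 ω)} ≤ ENNReal.ofReal (exp (-t) * β ^ n) := by
  have hsub : {ω | ∃ k ≤ n, t ≤ c * (X k ω - X 0 ω)} ⊆ {ω | exp t ≤
      (Finset.range (n + 1)).sup' Finset.nonempty_range_add_one
        fun k => exp (c * (X k ω - X 0 ω))} := by
    rintro ω ⟨k, hkn, hk⟩
    exact (exp_le_exp.mpr hk).trans
      (Finset.le_sup' (fun k => exp (c * (X k ω - X 0 ω))) (by simpa [Nat.lt_succ_iff] using hkn))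
  calc μ _ ≤ μ _ := measure_mono hsub
    _ ≤ ENNReal.ofReal ((∫ ω, exp (c * (X n ω - X 0 ω)) ∂μ) / exp t) :=
      (submartingale_exp_mul_sub_zero hX hb hlow).measure_le_sup'_le
        (fun _ _ => (exp_pos _).le) (exp_pos t) n
    _ ≤ ENNReal.ofReal (exp (-t) * β ^ n) := by
      rw [exp_neg, ← div_eq_inv_mul]
      gcongr
      exact integral_exp_mul_sub_zero_le_pow hX hb hβ hup n

lemma measure_exists_le_abs_sub_zero_le (hd : 0 < d)
    (hsymm : ∀ k c, μ[fun ω => exp (c * (X (k + 1) ω - X k ω)) | F k]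
      =ᵐ[μ] μ[fun ω => exp (-c * (X (k + 1) ω - X k ω)) | F k])
    {σ : ℝ} (hvar : ∀ k, ∀ᵐ ω ∂μ, μ[fun ω => (X (k + 1) ω - X k ω) ^ 2 | F k] ω ≤ σ ^ 2)
    (c t : ℝ) (n : ℕ) :
    μ {ω | ∃ k ≤ n, t ≤ |X k ω - X 0 ω|} ≤ ENNReal.ofReal
      (2 * (exp (-(|c| * t)) * (1 + σ ^ 2 / d ^ 2 * (cosh (c * d) - 1)) ^ n)) := by
  set β := 1 + σ ^ 2 / d ^ 2 * (cosh (c * d) - 1)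
  have hβ : 0 ≤ β := by
    have := one_le_cosh (c * d)
    positivity
  have hside : ∀ s, |s| = |c| → μ {ω | ∃ k ≤ n, |c| * t ≤ s * (X k ω - X 0 ω)}
      ≤ ENNReal.ofReal (exp (-(|c| * t)) * β ^ n) := by
    intro s hs
    have hξ : ∀ k, AEMeasurable (fun ω => X (k + 1) ω - X k ω) μ := fun k =>
      (hX.stronglyMeasurable.sub hX.stronglyMeasurable).aemeasurable
    have hcosh : cosh (s * d) = cosh (c * d) := by
      rw [← cosh_abs, abs_mul, hs, ← abs_mul, cosh_abs]
    refine measure_exists_le_mul_sub_zero_le hX hb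
      (fun k => one_le_condExp_exp_mul (hξ k) (hb k) (F.le k) (hsymm k s)) (fun k => ?_) hβ _ n
    simpa only [hcosh] using condExp_exp_mul_le (hξ k) (hb k) (F.le k) hd (hsymm k s) (hvar k)
  have hsub : {ω | ∃ k ≤ n, t ≤ |X k ω - X 0 ω|} ⊆
      {ω | ∃ k ≤ n, |c| * t ≤ |c| * (X k ω - X 0 ω)} ∪
        {ω | ∃ k ≤ n, |c| * t ≤ -|c| * (X k ω - X 0 ω)} := by
    rintro ω ⟨k, hkn, hk⟩
    rcases le_abs.mp hk with h | h
    · exact .inl ⟨k, hkn, mul_le_mul_of_nonneg_left h (abs_nonneg c)⟩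
    · refine .inr ⟨k, hkn, ?_⟩
      rw [neg_mul, ← mul_neg]
      exact mul_le_mul_of_nonneg_left h (abs_nonneg c)
  calc μ _ ≤ μ _ := measure_mono hsub
    _ ≤ _ := measure_union_le _ _
    _ ≤ _ := add_le_add (hside |c| (abs_abs c)) (hside (-|c|) (by rw [abs_neg, abs_abs]))
    _ = _ := by
      rw [← ENNReal.ofReal_add (by positivity) (by positivity)]
      ring_nf

end Chernoff

-- The maximizer of `x ↦ δ x - log (1 + γ (cosh x - 1))`; the bound below holds at every `x`.
noncomputable def EexpArg (γ δ : ℝ) : ℝ :=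
  log ((δ * (1 - γ) + √(δ ^ 2 * (1 - γ) ^ 2 + γ ^ 2 * (1 - δ ^ 2))) / (γ * (1 - δ)))

lemma Eexp_eq (γ δ : ℝ) :
    Eexp γ δ = δ * EexpArg γ δ - log (1 + γ * (cosh (EexpArg γ δ) - 1)) := rfl

lemma exp_neg_abs_mul_mul_pow_le {γ δ x : ℝ} (hγ : 0 ≤ γ) (hδ : 0 ≤ δ) (n : ℕ) :
    exp (-(|x| * (δ * n))) * (1 + γ * (cosh x - 1)) ^ n
      ≤ exp (-n * (δ * x - log (1 + γ * (cosh x - 1)))) := by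
  have hβ : 0 < 1 + γ * (cosh x - 1) := by
    have := one_le_cosh x
    positivity
  rw [show -n * (δ * x - log (1 + γ * (cosh x - 1)))
      = -(x * (δ * n)) + n * log (1 + γ * (cosh x - 1)) by ring, exp_add, exp_nat_mul, exp_log hβ]
  gcongr
  exact le_abs_self x

theorem conditionally_symmetric_martingale_bound_general
    {Ω : Type*} {m0 : MeasurableSpace Ω} {μ : Measure Ω} [IsProbabilityMeasure μ]
    {F : Filtration ℕ m0} {X : ℕ → Ω → ℝ}
    (hmart : Martingale X F μ)
    (hsymm : ∀ k : ℕ, 1 ≤ k → ∀ g : ℝ → ℝ, Measurable g →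
      μ[fun ω => g (X k ω - X (k - 1) ω) | F (k - 1)]
        =ᵐ[μ] μ[fun ω => g (-(X k ω - X (k - 1) ω)) | F (k - 1)])
    {d σ : ℝ} (hd : 0 < d)
    (hbdd : ∀ k : ℕ, 1 ≤ k → ∀ᵐ ω ∂μ, |X k ω - X (k - 1) ω| ≤ d)
    (hvar : ∀ k : ℕ, 1 ≤ k → ∀ᵐ ω ∂μ,
      (μ[fun ω => (X k ω - X (k - 1) ω) ^ 2 | F (k - 1)]) ω ≤ σ ^ 2)
    {α : ℝ} (hα : 0 ≤ α) (n : ℕ) :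
    μ {ω | ∃ k, 1 ≤ k ∧ k ≤ n ∧ α * n ≤ |X k ω - X 0 ω|}
      ≤ ENNReal.ofReal (2 * Real.exp (-(n : ℝ) * Eexp (σ ^ 2 / d ^ 2) (α / d))) := by
  have hsymm_succ : ∀ k c, μ[fun ω => exp (c * (X (k + 1) ω - X k ω)) | F k]
      =ᵐ[μ] μ[fun ω => exp (-c * (X (k + 1) ω - X k ω)) | F k] := fun k c => by
    simpa only [Nat.add_sub_cancel, mul_neg, ← neg_mul] using
      hsymm (k + 1) k.succ_pos (fun t => exp (c * t)) (by fun_prop)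
  have key := measure_exists_le_abs_sub_zero_le hmart.stronglyAdapted
    (fun k => hbdd (k + 1) k.succ_pos) hd hsymm_succ (fun k => hvar (k + 1) k.succ_pos)
    (EexpArg (σ ^ 2 / d ^ 2) (α / d) / d) (α * n) n
  rw [abs_div, abs_of_pos hd, div_mul_cancel₀ _ hd.ne',
    show ∀ y, y / d * (α * n) = y * (α / d * n) by intro y; ring] at key
  calc μ {ω | ∃ k, 1 ≤ k ∧ k ≤ n ∧ α * n ≤ |X k ω - X 0 ω|}
      ≤ μ {ω | ∃ k ≤ n, α * n ≤ |X k ω - X 0 ω|} :=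
        measure_mono fun ω ⟨k, _, hkn, hk⟩ => ⟨k, hkn, hk⟩
    _ ≤ _ := key
    _ ≤ _ := by
      rw [Eexp_eq]
      gcongr
      exact exp_neg_abs_mul_mul_pow_le (by positivity) (by positivity) n

/-- Theorem 1: exponential bound for conditionally symmetric martingales with bounded jumps
and bounded conditional variance. -/
theorem conditionally_symmetric_martingale_bound
    {Ω : Type*} {m0 : MeasurableSpace Ω} {μ : Measure Ω} [IsProbabilityMeasure μ]
    {F : Filtration ℕ m0} {X : ℕ → Ω → ℝ}
    (hmart : Martingale X F μ)
    (hsymm : ∀ k : ℕ, 1 ≤ k → ∀ g : ℝ → ℝ, Measurable g →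
      μ[fun ω => g (X k ω - X (k - 1) ω) | F (k - 1)]
        =ᵐ[μ] μ[fun ω => g (-(X k ω - X (k - 1) ω)) | F (k - 1)])
    {d σ : ℝ} (hd : 0 < d) (hσ : 0 < σ)
    (hbdd : ∀ k : ℕ, 1 ≤ k → ∀ᵐ ω ∂μ, |X k ω - X (k - 1) ω| ≤ d)
    (hvar : ∀ k : ℕ, 1 ≤ k → ∀ᵐ ω ∂μ,
      (μ[fun ω => (X k ω - X (k - 1) ω) ^ 2 | F (k - 1)]) ω ≤ σ ^ 2)
    {α : ℝ} (hα : 0 ≤ α) (hδ : α / d < 1) (n : ℕ) (hn : 1 ≤ n) :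
    μ {ω | ∃ k, 1 ≤ k ∧ k ≤ n ∧ α * n ≤ |X k ω - X 0 ω|}
      ≤ ENNReal.ofReal (2 * Real.exp (-(n : ℝ) * Eexp (σ ^ 2 / d ^ 2) (α / d))) :=
  conditionally_symmetric_martingale_bound_general hmart hsymm hd hbdd hvar hα n
end

section
/- Let {U_k}_{k≥1} be i.i.d. bounded real-valued random variables in L² whose distribution is symmetric around their mean, with |U_1 − E[U_1]| ≤ d almost surely for some d > 0 and Var(U_1) ≤ γd² for some γ ∈ (0,1]. Let S_n = Σ_{k=1}^n U_k. Then for every α ≥ 0 with δ = α/d ∈ [0,1) and every n ≥ 1, P( max_{1≤k≤n} |S_k − k·E[U_1]| ≥ αn ) ≤ 2 exp(−n E(γ,δ)). -/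
open MeasureTheory ProbabilityTheory Filter Set

/-!
Put `V = U₁ - 𝔼 U₁`. By symmetry `𝔼 e^{tV} = 𝔼 cosh (tV)`, and convexity of `sinh` on `[0, ∞)`
gives `cosh (s y) ≤ 1 + s² (cosh y - 1)` for `|s| ≤ 1`; with `s = V / d` this yields
`1 ≤ 𝔼 e^{tV} ≤ 1 + γ (cosh (t d) - 1)`. The lower bound makes `exp (t (S_k - k 𝔼 U₁))` a
submartingale, so Doob's maximal inequality bounds each one-sided maximal tail by
`e^{-t α n} (1 + γ (cosh (t d) - 1))ⁿ`. With `t = |x| / d` this is at most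
`exp (-n (δ x - log (1 + γ (cosh x - 1))))` for every real `x`, and `Eexp γ δ` is the value of
this exponent at its maximizing `x`.
-/

open Real
open scoped NNReal ENNReal

lemma convexOn_sinh_Ici : ConvexOn ℝ (Ici 0) sinh :=
  MonotoneOn.convexOn_of_deriv (convex_Ici 0) continuous_sinh.continuousOn
    differentiable_sinh.differentiableOn
    (by rw [Real.deriv_sinh, interior_Ici]
        exact cosh_strictMonoOn.monotoneOn.mono Ioi_subset_Ici_self)

lemma sinh_mul_le_mul_sinh {a u : ℝ} (ha₀ : 0 ≤ a) (ha₁ : a ≤ 1) (hu : 0 ≤ u) :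
    sinh (a * u) ≤ a * sinh u := by
  simpa using convexOn_sinh_Ici.2 (mem_Ici.2 hu) (mem_Ici.2 le_rfl) ha₀ (sub_nonneg.2 ha₁)
    (add_sub_cancel a 1)

lemma cosh_eq_one_add_two_mul_sinh_half_sq (z : ℝ) : cosh z = 1 + 2 * sinh (z / 2) ^ 2 := by
  rw [← cosh_sq_sub_sinh_sq (z / 2), ← mul_div_cancel₀ z two_ne_zero, cosh_two_mul]
  ring_nf

lemma cosh_mul_le_one_add_sq_mul {s : ℝ} (hs : |s| ≤ 1) (t : ℝ) :
    cosh (s * t) ≤ 1 + s ^ 2 * (cosh t - 1) := by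
  have hsinh : sinh (|s| * |t / 2|) ≤ |s| * sinh |t / 2| :=
    sinh_mul_le_mul_sinh (abs_nonneg s) hs (abs_nonneg _)
  have hsinh₀ : 0 ≤ sinh (|s| * |t / 2|) := sinh_nonneg_iff.2 (by positivity)
  have hsq := pow_le_pow_left₀ hsinh₀ hsinh 2
  rw [← abs_mul, ← abs_sinh, ← abs_sinh, sq_abs, mul_pow, sq_abs, sq_abs] at hsq
  rw [cosh_eq_one_add_two_mul_sinh_half_sq (s * t), cosh_eq_one_add_two_mul_sinh_half_sq t,
    mul_div_assoc]
  linarith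

section SymmetricBounded

variable {Ω : Type*} {m0 : MeasurableSpace Ω} {μ : Measure Ω} {V : Ω → ℝ} {d : ℝ}

lemma integrable_comp_of_abs_le [IsFiniteMeasure μ] {g : ℝ → ℝ} (hg : Continuous g)
    (hV : AEMeasurable V μ) (hbdd : ∀ᵐ ω ∂μ, |V ω| ≤ d) : Integrable (fun ω ↦ g (V ω)) μ := by
  obtain ⟨C, hC⟩ :=
    (isCompact_Icc (a := -d) (b := d)).exists_bound_of_continuousOn hg.continuousOn
  exact .of_bound (hg.measurable.comp_aemeasurable hV).aestronglyMeasurable C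
    (hbdd.mono fun ω hω ↦ hC _ (abs_le.1 hω))

variable [IsProbabilityMeasure μ] (hV : AEMeasurable V μ)
  (hsymm : μ.map V = μ.map (fun ω ↦ -V ω)) (hbdd : ∀ᵐ ω ∂μ, |V ω| ≤ d)
include hV hsymm hbdd

lemma mgf_eq_integral_cosh_of_map_eq_map_neg (t : ℝ) :
    mgf V μ t = ∫ ω, cosh (t * V ω) ∂μ := by
  have hneg : mgf V μ (-t) = mgf V μ t := by
    rw [← mgf_neg]
    exact congrFun (mgf_congr_identDistrib ⟨hV.neg, hV, hsymm.symm⟩) t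
  have hint (c : ℝ) : Integrable (fun ω ↦ exp (c * V ω)) μ :=
    integrable_comp_of_abs_le (g := fun x ↦ exp (c * x)) (by fun_prop) hV hbdd
  calc mgf V μ t = (mgf V μ t + mgf V μ (-t)) / 2 := by rw [hneg]; ring
    _ = ∫ ω, cosh (t * V ω) ∂μ := by
      rw [mgf, mgf, ← integral_add (hint t) (hint (-t)), ← integral_div]
      simp_rw [cosh_eq, neg_mul]

lemma one_le_mgf_of_map_eq_map_neg (t : ℝ) : 1 ≤ mgf V μ t := by
  rw [mgf_eq_integral_cosh_of_map_eq_map_neg hV hsymm hbdd]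
  calc (1 : ℝ) = ∫ _, 1 ∂μ := by simp
    _ ≤ ∫ ω, cosh (t * V ω) ∂μ := integral_mono (integrable_const 1)
      (integrable_comp_of_abs_le (g := fun x ↦ cosh (t * x)) (by fun_prop) hV hbdd)
      fun ω ↦ one_le_cosh _

lemma mgf_le_one_add_mul_cosh_sub_one_of_map_eq_map_neg {γ : ℝ} (hd : 0 < d)
    (hvar : ∫ ω, V ω ^ 2 ∂μ ≤ γ * d ^ 2) (t : ℝ) :
    mgf V μ t ≤ 1 + γ * (cosh (t * d) - 1) := by
  set K := (cosh (t * d) - 1) / d ^ 2 with hK_def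
  have hK : 0 ≤ K := div_nonneg (sub_nonneg.2 (one_le_cosh _)) (sq_nonneg d)
  have hpt : ∀ᵐ ω ∂μ, cosh (t * V ω) ≤ 1 + V ω ^ 2 * K := by
    filter_upwards [hbdd] with ω hω
    have hs : |V ω / d| ≤ 1 := by rwa [abs_div, abs_of_pos hd, div_le_one hd]
    convert cosh_mul_le_one_add_sq_mul hs (t * d) using 2
    · field_simp
    · rw [hK_def]; field_simp
  have hV2 : Integrable (fun ω ↦ V ω ^ 2) μ :=
    integrable_comp_of_abs_le (continuous_pow 2) hV hbdd
  rw [mgf_eq_integral_cosh_of_map_eq_map_neg hV hsymm hbdd]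
  calc ∫ ω, cosh (t * V ω) ∂μ ≤ ∫ ω, (1 + V ω ^ 2 * K) ∂μ :=
        integral_mono_ae
          (integrable_comp_of_abs_le (g := fun x ↦ cosh (t * x)) (by fun_prop) hV hbdd)
          ((integrable_const 1).add (hV2.mul_const K)) hpt
    _ = 1 + (∫ ω, V ω ^ 2 ∂μ) * K := by
      rw [integral_add (integrable_const 1) (hV2.mul_const K), integral_mul_const]
      simp
    _ ≤ 1 + γ * d ^ 2 * K := by gcongr
    _ = 1 + γ * (cosh (t * d) - 1) := by rw [hK_def]; field_simp

end SymmetricBounded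

section MaximalChernoff

variable {Ω : Type*} {m0 : MeasurableSpace Ω} {μ : Measure Ω} [IsProbabilityMeasure μ]
  {X : ℕ → Ω → ℝ} {t : ℝ}

lemma submartingale_exp_mul_sum_Icc (hmeas : ∀ i, Measurable (X i)) (hindep : iIndepFun X μ)
    (hmgf : ∀ i, 1 ≤ i → 1 ≤ mgf (X i) μ t) :
    Submartingale (fun k ω ↦ exp (t * ∑ i ∈ Finset.Icc 1 k, X i ω))
      (Filtration.natural X fun i ↦ (hmeas i).stronglyMeasurable) μ := by
  set ℱ := Filtration.natural X fun i ↦ (hmeas i).stronglyMeasurable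
  set f : ℕ → Ω → ℝ := fun k ω ↦ exp (t * ∑ i ∈ Finset.Icc 1 k, X i ω) with hf
  have hint (i : ℕ) (hi : 1 ≤ i) : Integrable (fun ω ↦ exp (t * X i ω)) μ :=
    mgf_pos_iff.1 (one_pos.trans_le (hmgf i hi))
  have hf_int (k : ℕ) : Integrable (f k) μ := by
    simpa [hf, Finset.sum_apply] using hindep.integrable_exp_mul_sum hmeas (s := Finset.Icc 1 k)
      fun i hi ↦ hint i (Finset.mem_Icc.1 hi).1
  have hadapted : StronglyAdapted ℱ f := fun k ↦ by
    refine (measurable_const.mul (Finset.measurable_sum _ fun i hi ↦ ?_)).exp.stronglyMeasurable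
    exact ((Filtration.stronglyAdapted_natural _ i).mono
      (ℱ.mono (Finset.mem_Icc.1 hi).2)).measurable
  refine submartingale_nat hadapted hf_int fun k ↦ ?_
  have hsplit : f (k + 1) = f k * fun ω ↦ exp (t * X (k + 1) ω) := by
    ext ω
    simp only [hf, Pi.mul_apply, Finset.sum_Icc_succ_top (Nat.le_add_left 1 k), mul_add, exp_add]
  have hpull : μ[f (k + 1) | ℱ k] =ᵐ[μ] f k * μ[fun ω ↦ exp (t * X (k + 1) ω) | ℱ k] := by
    rw [hsplit]
    exact condExp_mul_of_stronglyMeasurable_left (hadapted k) (hsplit ▸ hf_int (k + 1))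
      (hint (k + 1) (Nat.le_add_left 1 k))
  have hindep_step : μ[fun ω ↦ exp (t * X (k + 1) ω) | ℱ k] =ᵐ[μ] fun _ ↦ mgf (X (k + 1)) μ t :=
    condExp_indep_eq (hmeas (k + 1)).comap_le (ℱ.le k)
      ((measurable_const_mul t).exp.comp (comap_measurable (X (k + 1)))).stronglyMeasurable
      (hindep.indep_comap_natural_of_lt _ k.lt_succ_self)
  filter_upwards [hpull, hindep_step] with ω hω hω'
  rw [hω, Pi.mul_apply, hω']
  exact le_mul_of_one_le_right (exp_pos _).le (hmgf (k + 1) (Nat.le_add_left 1 k))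

theorem measure_exists_le_sum_Icc_le_exp_mul_prod_mgf (hmeas : ∀ i, Measurable (X i))
    (hindep : iIndepFun X μ) (ht : 0 ≤ t) (hmgf : ∀ i, 1 ≤ i → 1 ≤ mgf (X i) μ t)
    (a : ℝ) (n : ℕ) :
    μ {ω | ∃ k, 1 ≤ k ∧ k ≤ n ∧ a ≤ ∑ i ∈ Finset.Icc 1 k, X i ω}
      ≤ ENNReal.ofReal (exp (-t * a) * ∏ i ∈ Finset.Icc 1 n, mgf (X i) μ t) := by
  set f : ℕ → Ω → ℝ := fun k ω ↦ exp (t * ∑ i ∈ Finset.Icc 1 k, X i ω) with hf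
  have hsub := submartingale_exp_mul_sum_Icc hmeas hindep hmgf
  set ε : ℝ≥0 := (exp (t * a)).toNNReal
  have hε : (ε : ℝ) = exp (t * a) := Real.coe_toNNReal _ (exp_pos _).le
  set A := {ω | (ε : ℝ) ≤ (Finset.range (n + 1)).sup' Finset.nonempty_range_add_one
    fun k ↦ f k ω}
  have hsubset : {ω | ∃ k, 1 ≤ k ∧ k ≤ n ∧ a ≤ ∑ i ∈ Finset.Icc 1 k, X i ω} ⊆ A := by
    rintro ω ⟨k, -, hkn, hka⟩
    show (ε : ℝ) ≤ _
    rw [hε]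
    exact (exp_le_exp.2 (mul_le_mul_of_nonneg_left hka ht)).trans
      (Finset.le_sup' (fun k ↦ f k ω) (Finset.mem_range.2 (Nat.lt_succ_of_le hkn)))
  have hfn : ∫ ω, f n ω ∂μ = ∏ i ∈ Finset.Icc 1 n, mgf (X i) μ t := by
    rw [← hindep.mgf_sum hmeas]
    simp [hf, mgf, Finset.sum_apply]
  have hdoob : (ε : ℝ≥0∞) * μ A ≤ ENNReal.ofReal (∏ i ∈ Finset.Icc 1 n, mgf (X i) μ t) :=
    (maximal_ineq hsub (fun k ω ↦ (exp_pos _).le) n).trans <| ENNReal.ofReal_le_ofReal <|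
      hfn ▸ setIntegral_le_integral (hsub.integrable n) (ae_of_all _ fun ω ↦ (exp_pos _).le)
  calc μ {ω | ∃ k, 1 ≤ k ∧ k ≤ n ∧ a ≤ ∑ i ∈ Finset.Icc 1 k, X i ω} ≤ μ A := measure_mono hsubset
    _ ≤ ENNReal.ofReal (∏ i ∈ Finset.Icc 1 n, mgf (X i) μ t) / ENNReal.ofReal (exp (t * a)) :=
      ENNReal.le_div_iff_mul_le (.inl (by simp [exp_pos])) (.inl ENNReal.ofReal_ne_top) |>.2 <| by
        rwa [mul_comm]
    _ = ENNReal.ofReal (exp (-t * a) * ∏ i ∈ Finset.Icc 1 n, mgf (X i) μ t) := by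
      rw [← ENNReal.ofReal_div_of_pos (exp_pos _), div_eq_inv_mul, ← exp_neg, neg_mul]

end MaximalChernoff

section IdentDistrib

variable {Ω : Type*} {m0 : MeasurableSpace Ω} {μ : Measure Ω} [IsProbabilityMeasure μ]
  {d γ : ℝ}

theorem measure_exists_le_sum_Icc_le_of_identDistrib_of_map_eq_map_neg {Y : ℕ → Ω → ℝ}
    (hmeas : ∀ i, Measurable (Y i)) (hindep : iIndepFun Y μ)
    (hident : ∀ i, 1 ≤ i → IdentDistrib (Y i) (Y 1) μ μ)
    (hsymm : μ.map (Y 1) = μ.map (fun ω ↦ -Y 1 ω)) (hd : 0 < d)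
    (hbdd : ∀ᵐ ω ∂μ, |Y 1 ω| ≤ d) (hvar : ∫ ω, Y 1 ω ^ 2 ∂μ ≤ γ * d ^ 2)
    {t : ℝ} (ht : 0 ≤ t) (a : ℝ) (n : ℕ) :
    μ {ω | ∃ k, 1 ≤ k ∧ k ≤ n ∧ a ≤ ∑ i ∈ Finset.Icc 1 k, Y i ω}
      ≤ ENNReal.ofReal (exp (-t * a) * (1 + γ * (cosh (t * d) - 1)) ^ n) := by
  have hmgf (i : ℕ) (hi : 1 ≤ i) : mgf (Y i) μ t = mgf (Y 1) μ t :=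
    mgf_congr_of_identDistrib _ _ (hident i hi) t
  have hone_le := one_le_mgf_of_map_eq_map_neg (hmeas 1).aemeasurable hsymm hbdd t
  refine (measure_exists_le_sum_Icc_le_exp_mul_prod_mgf hmeas hindep ht
    (fun i hi ↦ hmgf i hi ▸ hone_le) a n).trans (ENNReal.ofReal_le_ofReal ?_)
  rw [Finset.prod_congr rfl fun i hi ↦ hmgf i (Finset.mem_Icc.1 hi).1, Finset.prod_const,
    Nat.card_Icc, Nat.add_sub_cancel]
  gcongr
  exact mgf_le_one_add_mul_cosh_sub_one_of_map_eq_map_neg (hmeas 1).aemeasurable hsymm hbdd hd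
    hvar t

theorem measure_exists_mul_le_sum_Icc_le_of_identDistrib_of_map_eq_map_neg {Y : ℕ → Ω → ℝ}
    (hmeas : ∀ i, Measurable (Y i)) (hindep : iIndepFun Y μ)
    (hident : ∀ i, 1 ≤ i → IdentDistrib (Y i) (Y 1) μ μ)
    (hsymm : μ.map (Y 1) = μ.map (fun ω ↦ -Y 1 ω)) (hd : 0 < d)
    (hbdd : ∀ᵐ ω ∂μ, |Y 1 ω| ≤ d) (hvar : ∫ ω, Y 1 ω ^ 2 ∂μ ≤ γ * d ^ 2)
    {α : ℝ} (hα : 0 ≤ α) (n : ℕ) (x : ℝ) :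
    μ {ω | ∃ k, 1 ≤ k ∧ k ≤ n ∧ α * n ≤ ∑ i ∈ Finset.Icc 1 k, Y i ω}
      ≤ ENNReal.ofReal (exp (-(n : ℝ) * (α / d * x - log (1 + γ * (cosh x - 1))))) := by
  set M := 1 + γ * (cosh x - 1)
  have hγ : 0 ≤ γ := le_of_mul_le_mul_right
    (by simpa using (integral_nonneg fun ω ↦ sq_nonneg (Y 1 ω)).trans hvar) (pow_pos hd 2)
  have hM : 0 < M := by nlinarith [mul_nonneg hγ (sub_nonneg.2 (one_le_cosh x))]
  have hexponent : (n : ℝ) * (α / d * x) ≤ |x| / d * (α * n) :=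
    calc (n : ℝ) * (α / d * x) ≤ n * (α / d * |x|) := by gcongr; exact le_abs_self x
      _ = |x| / d * (α * n) := by ring
  refine (measure_exists_le_sum_Icc_le_of_identDistrib_of_map_eq_map_neg hmeas hindep hident
    hsymm hd hbdd hvar (t := |x| / d) (by positivity) (α * n) n).trans
    (ENNReal.ofReal_le_ofReal ?_)
  rw [div_mul_cancel₀ _ hd.ne', cosh_abs]
  calc exp (-(|x| / d) * (α * n)) * M ^ n ≤ exp (-(n * (α / d * x))) * M ^ n := by
        gcongr; linarith
    _ = exp (-(n * (α / d * x)) + n * log M) := by rw [exp_add, exp_nat_mul, exp_log hM]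
    _ = exp (-(n : ℝ) * (α / d * x - log M)) := by ring_nf

theorem measure_exists_mul_le_abs_sum_Icc_sub_le {U : ℕ → Ω → ℝ}
    (hmeas : ∀ i, Measurable (U i)) (hindep : iIndepFun U μ)
    (hident : ∀ i, 1 ≤ i → IdentDistrib (U i) (U 1) μ μ)
    (hsymm : Measure.map (fun ω => U 1 ω - ∫ ω', U 1 ω' ∂μ) μ
      = Measure.map (fun ω => -(U 1 ω - ∫ ω', U 1 ω' ∂μ)) μ)
    (hd : 0 < d) (hbdd : ∀ᵐ ω ∂μ, |U 1 ω - ∫ ω', U 1 ω' ∂μ| ≤ d)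
    (hvar : ∫ ω, (U 1 ω - ∫ ω', U 1 ω' ∂μ) ^ 2 ∂μ ≤ γ * d ^ 2)
    {α : ℝ} (hα : 0 ≤ α) (n : ℕ) (x : ℝ) :
    μ {ω | ∃ k, 1 ≤ k ∧ k ≤ n ∧
        α * n ≤ |(∑ i ∈ Finset.Icc 1 k, U i ω) - k * ∫ ω', U 1 ω' ∂μ|}
      ≤ ENNReal.ofReal (2 * exp (-(n : ℝ) * (α / d * x - log (1 + γ * (cosh x - 1))))) := by
  set m := ∫ ω', U 1 ω' ∂μ
  have hcenter (k : ℕ) (ω : Ω) :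
      (∑ i ∈ Finset.Icc 1 k, U i ω) - k * m = ∑ i ∈ Finset.Icc 1 k, (U i ω - m) := by
    rw [Finset.sum_sub_distrib, Finset.sum_const, Nat.card_Icc, nsmul_eq_mul]
    simp
  have hsplit : {ω | ∃ k, 1 ≤ k ∧ k ≤ n ∧
        α * n ≤ |(∑ i ∈ Finset.Icc 1 k, U i ω) - k * m|}
      ⊆ {ω | ∃ k, 1 ≤ k ∧ k ≤ n ∧ α * n ≤ ∑ i ∈ Finset.Icc 1 k, (U i ω - m)}
        ∪ {ω | ∃ k, 1 ≤ k ∧ k ≤ n ∧ α * n ≤ ∑ i ∈ Finset.Icc 1 k, -(U i ω - m)} := by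
    rintro ω ⟨k, hk₁, hkn, hk⟩
    rcases le_abs.1 (hcenter k ω ▸ hk) with hk | hk
    · exact .inl ⟨k, hk₁, hkn, hk⟩
    · exact .inr ⟨k, hk₁, hkn, by rwa [Finset.sum_neg_distrib]⟩
  have hupper := measure_exists_mul_le_sum_Icc_le_of_identDistrib_of_map_eq_map_neg
    (Y := fun i ω ↦ U i ω - m) (fun i ↦ (hmeas i).sub_const m)
    (hindep.comp _ fun _ ↦ measurable_id.sub_const m)
    (fun i hi ↦ (hident i hi).comp (measurable_id.sub_const m)) hsymm hd hbdd hvar hα n x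
  have hlower := measure_exists_mul_le_sum_Icc_le_of_identDistrib_of_map_eq_map_neg
    (Y := fun i ω ↦ -(U i ω - m)) (fun i ↦ ((hmeas i).sub_const m).neg)
    (hindep.comp _ fun _ ↦ (measurable_id.sub_const m).neg)
    (fun i hi ↦ (hident i hi).comp (measurable_id.sub_const m).neg) (by simpa using hsymm.symm)
    hd (by simpa only [abs_neg] using hbdd) (by simpa only [neg_sq] using hvar) hα n x
  calc _ ≤ _ := measure_mono hsplit
    _ ≤ _ := measure_union_le _ _
    _ ≤ _ := add_le_add hupper hlower
    _ = _ := by rw [← ENNReal.ofReal_add (exp_pos _).le (exp_pos _).le, two_mul]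

end IdentDistrib

theorem iid_symmetric_bounded_sum_tail_bound_general
    {Ω : Type*} {m0 : MeasurableSpace Ω} {μ : Measure Ω} [IsProbabilityMeasure μ]
    {U : ℕ → Ω → ℝ}
    (hmeas : ∀ i, Measurable (U i))
    (hindep : iIndepFun U μ)
    (hident : ∀ i, 1 ≤ i → IdentDistrib (U i) (U 1) μ μ)
    (hsymm : Measure.map (fun ω => U 1 ω - ∫ ω', U 1 ω' ∂μ) μ
      = Measure.map (fun ω => -(U 1 ω - ∫ ω', U 1 ω' ∂μ)) μ)
    {d γ : ℝ} (hd : 0 < d)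
    (hbdd : ∀ᵐ ω ∂μ, |U 1 ω - ∫ ω', U 1 ω' ∂μ| ≤ d)
    (hvar : ∫ ω, (U 1 ω - ∫ ω', U 1 ω' ∂μ) ^ 2 ∂μ ≤ γ * d ^ 2)
    {α : ℝ} (hα : 0 ≤ α) (n : ℕ) :
    μ {ω | ∃ k, 1 ≤ k ∧ k ≤ n ∧
        α * n ≤ |(∑ i ∈ Finset.Icc 1 k, U i ω) - k * ∫ ω', U 1 ω' ∂μ|}
      ≤ ENNReal.ofReal (2 * Real.exp (-(n : ℝ) * Eexp γ (α / d))) :=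
  measure_exists_mul_le_abs_sum_Icc_sub_le hmeas hindep hident hsymm hd hbdd hvar hα n _

/-- Corollary 1: tail bound for partial sums of i.i.d. bounded random variables whose
distribution is symmetric around their mean. -/
theorem iid_symmetric_bounded_sum_tail_bound
    {Ω : Type*} {m0 : MeasurableSpace Ω} {μ : Measure Ω} [IsProbabilityMeasure μ]
    {U : ℕ → Ω → ℝ}
    (hmeas : ∀ i, Measurable (U i))
    (hL2 : MemLp (U 1) 2 μ)
    (hindep : iIndepFun U μ)
    (hident : ∀ i, 1 ≤ i → IdentDistrib (U i) (U 1) μ μ)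
    (hsymm : Measure.map (fun ω => U 1 ω - ∫ ω', U 1 ω' ∂μ) μ
      = Measure.map (fun ω => -(U 1 ω - ∫ ω', U 1 ω' ∂μ)) μ)
    {d γ : ℝ} (hd : 0 < d) (hγ : γ ∈ Set.Ioc (0 : ℝ) 1)
    (hbdd : ∀ᵐ ω ∂μ, |U 1 ω - ∫ ω', U 1 ω' ∂μ| ≤ d)
    (hvar : ∫ ω, (U 1 ω - ∫ ω', U 1 ω' ∂μ) ^ 2 ∂μ ≤ γ * d ^ 2)
    {α : ℝ} (hα : 0 ≤ α) (hδ : α / d < 1) (n : ℕ) (hn : 1 ≤ n) :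
    μ {ω | ∃ k, 1 ≤ k ∧ k ≤ n ∧
        α * n ≤ |(∑ i ∈ Finset.Icc 1 k, U i ω) - k * ∫ ω', U 1 ω' ∂μ|}
      ≤ ENNReal.ofReal (2 * Real.exp (-(n : ℝ) * Eexp γ (α / d))) :=
  iid_symmetric_bounded_sum_tail_bound_general (m0 := m0) hmeas hindep hident hsymm hd hbdd hvar hα
    n
end

section
/- Let {X_k, F_k}_{k≥0} be a discrete-time real-valued martingale. Assume that for some fixed numbers d, σ > 0, almost surely |X_k − X_{k−1}| ≤ d and E[(X_k − X_{k−1})² | F_{k−1}] ≤ σ² for every k ≥ 1. Set γ = σ²/d² and δ = α/d. Then for every α ≥ 0 with δ ∈ [0,1] and every n ≥ 1, P( max_{1≤k≤n} |X_k − X_0| ≥ αn ) ≤ 2 exp( −n D( (δ+γ)/(1+γ) ‖ γ/(1+γ) ) ). -/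
/-!
Bennett's parabola bounds `exp (l * y)`, for `y ≤ d`, by a quadratic in `y` whose conditional
expectation, given conditional mean `0` and conditional variance at most `γ d²`, is at most the
moment generating function `M(l)` of the centred two-point law on `{d, -γ d}`. Iterating along the
filtration gives `E exp (l (Xₙ - X₀)) ≤ M(l)ⁿ`; since `exp (l (Xₖ - X₀))` is a nonnegative
submartingale, Doob's maximal inequality bounds `P(maxₖ (Xₖ - X₀) ≥ c)` by `M(l)ⁿ e^{-lc}`.
The same bound for `-X` handles the absolute value, and minimising over `l ≥ 0` turns
`M(l) e^{-lα}` into `exp (-D((δ + γ)/(1 + γ) ‖ γ/(1 + γ)))`; for `δ = 1` the infimum is the limit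
`l → ∞`.
-/

open MeasureTheory ProbabilityTheory Filter Set

/-- Kullback–Leibler divergence (natural base) between the Bernoulli distributions
`(p, 1−p)` and `(q, 1−q)`; the convention `0 · ln 0 = 0` holds automatically since
`Real.log 0 = 0` in Lean. -/
noncomputable def klBer (p q : ℝ) : ℝ :=
  p * Real.log (p / q) + (1 - p) * Real.log ((1 - p) / (1 - q))

open Real Topology
open scoped ENNReal

/-- Integral form of `(exp x - 1 - x) / x ^ 2`, in which monotonicity is evident. -/
noncomputable def expRemainderCoeff (x : ℝ) : ℝ :=
  ∫ t in (0 : ℝ)..1, (1 - t) * exp (t * x)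

lemma expRemainderCoeff_nonneg (x : ℝ) : 0 ≤ expRemainderCoeff x :=
  intervalIntegral.integral_nonneg zero_le_one fun _ ht =>
    mul_nonneg (sub_nonneg.2 ht.2) (exp_pos _).le

lemma monotone_expRemainderCoeff : Monotone expRemainderCoeff := by
  intro x y hxy
  refine intervalIntegral.integral_mono_on zero_le_one
    (Continuous.intervalIntegrable (by fun_prop) _ _)
    (Continuous.intervalIntegrable (by fun_prop) _ _) fun t ht => ?_
  gcongr
  · exact sub_nonneg.2 ht.2
  · exact ht.1

lemma exp_eq_one_add_add_sq_mul_expRemainderCoeff (x : ℝ) :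
    exp x = 1 + x + x ^ 2 * expRemainderCoeff x := by
  rcases eq_or_ne x 0 with rfl | hx
  · simp
  have hderiv : ∀ t ∈ uIcc (0 : ℝ) 1, HasDerivAt
      (fun t => exp (t * x) * ((1 - t) / x + 1 / x ^ 2)) ((1 - t) * exp (t * x)) t := by
    intro t _
    have h := (((hasDerivAt_id t).mul_const x).exp).mul
      ((((hasDerivAt_id t).const_sub 1).div_const x).add_const (1 / x ^ 2))
    refine h.congr_deriv ?_
    simp only [id]
    field_simp
    ring
  rw [expRemainderCoeff, intervalIntegral.integral_eq_sub_of_hasDerivAt hderiv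
    (Continuous.intervalIntegrable (by fun_prop) _ _)]
  field_simp
  simp only [mul_zero, exp_zero]
  ring

/-- Moment generating function at `l` of the centred law on `{d, -γ d}`, which is extremal for
`E exp (l Y)` among `Y ≤ d` with mean `0` and variance `γ d ^ 2`. -/
noncomputable def twoPointMGF (γ d l : ℝ) : ℝ :=
  γ / (1 + γ) * exp (l * d) + 1 / (1 + γ) * exp (-(l * γ * d))

/-- Bennett's parabola: the quadratic touching `y ↦ exp (l * y)` at `-γ d` and meeting it at `d`. -/
lemma exists_quadratic_majorant_exp {γ d l : ℝ} (hγ : 0 ≤ γ) (hl : 0 ≤ l) :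
    ∃ b c : ℝ, 0 ≤ c ∧ ∀ y ≤ d,
      exp (l * y) ≤ twoPointMGF γ d l - c * (γ * d ^ 2) + b * y + c * y ^ 2 := by
  set φ := expRemainderCoeff (l * (1 + γ) * d)
  set e := exp (-(l * γ * d))
  refine ⟨e * (l + 2 * l ^ 2 * φ * γ * d), e * (l ^ 2 * φ),
    by have := expRemainderCoeff_nonneg (l * (1 + γ) * d); positivity, fun y hy => ?_⟩
  have hexp_d : exp (l * d) = e * (1 + l * (1 + γ) * d + (l * (1 + γ) * d) ^ 2 * φ) := by
    rw [← exp_eq_one_add_add_sq_mul_expRemainderCoeff, ← exp_add]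
    ring_nf
  have hle : l * (y + γ * d) ≤ l * (1 + γ) * d := by nlinarith
  have hexp_y : exp (l * (y + γ * d)) ≤
      1 + l * (y + γ * d) + (l * (y + γ * d)) ^ 2 * φ := by
    rw [exp_eq_one_add_add_sq_mul_expRemainderCoeff]
    gcongr
    exact monotone_expRemainderCoeff hle
  have hγ1 : 1 + γ ≠ 0 := by positivity
  calc exp (l * y) = e * exp (l * (y + γ * d)) := by rw [← exp_add]; ring_nf
    _ ≤ e * (1 + l * (y + γ * d) + (l * (y + γ * d)) ^ 2 * φ) := by gcongr
    _ = _ := by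
      rw [twoPointMGF, hexp_d]
      field_simp
      ring

lemma twoPointMGF_pos {γ d l : ℝ} (hγ : 0 ≤ γ) : 0 < twoPointMGF γ d l := by
  rw [twoPointMGF]
  positivity

namespace MeasureTheory

section CondExp

variable {Ω : Type*} {m m0 : MeasurableSpace Ω} {μ : Measure Ω}

lemma ae_norm_exp_mul_le {Y : Ω → ℝ} {d l : ℝ} (hl : 0 ≤ l) (hYd : ∀ᵐ ω ∂μ, Y ω ≤ d) :
    ∀ᵐ ω ∂μ, ‖exp (l * Y ω)‖ ≤ exp (l * d) := by
  filter_upwards [hYd] with ω hω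
  rw [norm_of_nonneg (exp_pos _).le]
  exact exp_le_exp.2 (mul_le_mul_of_nonneg_left hω hl)

lemma integrable_exp_mul_of_ae_le [IsFiniteMeasure μ] {Y : Ω → ℝ} {d l : ℝ} (hl : 0 ≤ l)
    (hY : AEStronglyMeasurable Y μ) (hYd : ∀ᵐ ω ∂μ, Y ω ≤ d) :
    Integrable (fun ω => exp (l * Y ω)) μ :=
  .of_bound (continuous_exp.comp_aestronglyMeasurable (hY.const_mul l)) _
    (ae_norm_exp_mul_le hl hYd)

lemma condExp_exp_mul_le_twoPointMGF [IsFiniteMeasure μ] (hm : m ≤ m0) {Y : Ω → ℝ}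
    {γ d l : ℝ} (hγ : 0 ≤ γ) (hl : 0 ≤ l) (hY : Integrable Y μ)
    (hY2 : Integrable (fun ω => Y ω ^ 2) μ) (hYd : ∀ᵐ ω ∂μ, Y ω ≤ d) (hmean : μ[Y|m] =ᵐ[μ] 0)
    (hvar : ∀ᵐ ω ∂μ, μ[fun ω => Y ω ^ 2|m] ω ≤ γ * d ^ 2) :
    ∀ᵐ ω ∂μ, μ[fun ω => exp (l * Y ω)|m] ω ≤ twoPointMGF γ d l := by
  obtain ⟨b, c, hc, hmaj⟩ := exists_quadratic_majorant_exp (d := d) hγ hl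
  set a := twoPointMGF γ d l - c * (γ * d ^ 2)
  have hquad_int : Integrable (fun ω => a + b * Y ω + c * Y ω ^ 2) μ :=
    ((integrable_const a).add (hY.const_mul b)).add (hY2.const_mul c)
  have hquad : μ[fun ω => a + b * Y ω + c * Y ω ^ 2|m] =ᵐ[μ]
      fun ω => a + b * μ[Y|m] ω + c * μ[fun ω => Y ω ^ 2|m] ω := by
    filter_upwards [condExp_add ((integrable_const a).add (hY.const_mul b)) (hY2.const_mul c) m,
      condExp_add (integrable_const a) (hY.const_mul b) m,
      condExp_smul b Y m, condExp_smul c (fun ω => Y ω ^ 2) m] with ω h1 h2 h3 h4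
    refine h1.trans ?_
    rw [Pi.add_apply, h2, Pi.add_apply, condExp_const hm,
      show (fun ω => b * Y ω) = b • Y from rfl, h3,
      show (fun ω => c * Y ω ^ 2) = c • fun ω => Y ω ^ 2 from rfl, h4]
    rfl
  have hexp_le : ∀ᵐ ω ∂μ, exp (l * Y ω) ≤ a + b * Y ω + c * Y ω ^ 2 :=
    hYd.mono fun ω hω => hmaj _ hω
  filter_upwards [condExp_mono (integrable_exp_mul_of_ae_le hl hY.1 hYd) hquad_int hexp_le,
    hquad, hmean, hvar] with ω hle hq h0 hv
  rw [hq, h0, Pi.zero_apply] at hle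
  calc _ ≤ _ := hle
    _ ≤ a + b * 0 + c * (γ * d ^ 2) := by gcongr
    _ = twoPointMGF γ d l := by simp [a]

lemma integral_mul_le_of_condExp_le (hm : m ≤ m0) [SigmaFinite (μ.trim hm)] {f g : Ω → ℝ} {C : ℝ}
    (hf : StronglyMeasurable[m] f) (hf₀ : 0 ≤ᵐ[μ] f) (hfi : Integrable f μ) (hg : Integrable g μ)
    (hfg : Integrable (f * g) μ) (hgC : ∀ᵐ ω ∂μ, μ[g|m] ω ≤ C) :
    ∫ ω, f ω * g ω ∂μ ≤ C * ∫ ω, f ω ∂μ := by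
  have hpull := condExp_mul_of_stronglyMeasurable_left hf hfg hg
  calc ∫ ω, f ω * g ω ∂μ = ∫ ω, (f * μ[g|m]) ω ∂μ := by
        rw [← integral_condExp hm]; exact integral_congr_ae hpull
    _ ≤ ∫ ω, f ω * C ∂μ := by
        refine integral_mono_ae (integrable_condExp.congr hpull) (hfi.mul_const C) ?_
        filter_upwards [hf₀, hgC] with ω h₀ h
        exact mul_le_mul_of_nonneg_left h h₀
    _ = C * ∫ ω, f ω ∂μ := by rw [integral_mul_const, mul_comm]

end CondExp

section Martingale

variable {Ω ι : Type*} {m0 : MeasurableSpace Ω} {μ : Measure Ω} [Preorder ι] {F : Filtration ι m0}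

lemma Martingale.condExp_sub_ae_eq_zero [SigmaFiniteFiltration μ F] {f : ι → Ω → ℝ}
    (hf : Martingale f F μ) {i j : ι} (hij : i ≤ j) : μ[f j - f i|F i] =ᵐ[μ] 0 := by
  filter_upwards [condExp_sub (hf.integrable j) (hf.integrable i) (F i), hf.condExp_ae_eq hij]
    with ω h1 h2
  rw [h1, Pi.sub_apply, h2,
    condExp_of_stronglyMeasurable (F.le i) (hf.stronglyAdapted i) (hf.integrable i)]
  simp

lemma Martingale.submartingale_comp_convexOn [IsFiniteMeasure μ] {Y : ι → Ω → ℝ}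
    (hY : Martingale Y F μ) {φ : ℝ → ℝ} (hφ : ConvexOn ℝ univ φ) (hφc : Continuous φ)
    (hint : ∀ i, Integrable (fun ω => φ (Y i ω)) μ) :
    Submartingale (fun i ω => φ (Y i ω)) F μ := by
  refine ⟨fun i => hφc.comp_stronglyMeasurable (hY.stronglyAdapted i), fun i j hij => ?_, hint⟩
  filter_upwards [hY.condExp_ae_eq hij,
    hφ.map_condExp_le_univ (F.le i) hφc.lowerSemicontinuous (hY.integrable j) (hint j)]
    with ω h1 h2
  rw [Function.comp_apply, h1] at h2
  exact h2

end Martingale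

lemma Submartingale.measure_exists_le_le {Ω : Type*} {m0 : MeasurableSpace Ω} {μ : Measure Ω}
    [IsFiniteMeasure μ] {F : Filtration ℕ m0} {f : ℕ → Ω → ℝ} (hf : Submartingale f F μ)
    (hf₀ : 0 ≤ f) {ε : ℝ} (hε : 0 < ε) (n : ℕ) :
    μ {ω | ∃ k ≤ n, ε ≤ f k ω} ≤ ENNReal.ofReal ((∫ ω, f n ω ∂μ) / ε) := by
  set A := {ω | (ε.toNNReal : ℝ) ≤
    (Finset.range (n + 1)).sup' Finset.nonempty_range_add_one fun k => f k ω}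
  have hsub : {ω | ∃ k ≤ n, ε ≤ f k ω} ⊆ A := by
    rintro ω ⟨k, hk, hεk⟩
    rw [Set.mem_ofPred_eq, Real.coe_toNNReal _ hε.le]
    exact hεk.trans (Finset.le_sup' (fun k => f k ω) (Finset.mem_range_succ_iff.2 hk))
  have hA : ENNReal.ofReal ε * μ A ≤ ENNReal.ofReal (∫ ω, f n ω ∂μ) :=
    (maximal_ineq hf hf₀ n).trans <| ENNReal.ofReal_le_ofReal <|
      setIntegral_le_integral (hf.integrable n) (Eventually.of_forall (hf₀ n))
  rw [ENNReal.ofReal_div_of_pos hε]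
  refine (measure_mono hsub).trans ?_
  rw [ENNReal.le_div_iff_mul_le (Or.inl (by simpa using hε)) (Or.inl ENNReal.ofReal_ne_top),
    mul_comm]
  exact hA

section ExponentialMoment

variable {Ω : Type*} {m0 : MeasurableSpace Ω} {μ : Measure Ω} [IsProbabilityMeasure μ]
  {F : Filtration ℕ m0} {X : ℕ → Ω → ℝ} {γ d l : ℝ}

lemma Martingale.condExp_exp_mul_sub_le_twoPointMGF (hX : Martingale X F μ)
    (hγ : 0 ≤ γ) (hl : 0 ≤ l) {k : ℕ} (hbdd : ∀ᵐ ω ∂μ, |X (k + 1) ω - X k ω| ≤ d)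
    (hvar : ∀ᵐ ω ∂μ, μ[fun ω => (X (k + 1) ω - X k ω) ^ 2|F k] ω ≤ γ * d ^ 2) :
    ∀ᵐ ω ∂μ, μ[fun ω => exp (l * (X (k + 1) ω - X k ω))|F k] ω ≤ twoPointMGF γ d l := by
  have hΔ : Integrable (fun ω => X (k + 1) ω - X k ω) μ := (hX.integrable _).sub (hX.integrable _)
  have hΔ2 : Integrable (fun ω => (X (k + 1) ω - X k ω) ^ 2) μ := by
    refine .of_bound (hΔ.1.pow 2) (d ^ 2) (hbdd.mono fun ω h => ?_)
    rw [norm_pow, Real.norm_eq_abs]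
    exact pow_le_pow_left₀ (abs_nonneg _) h 2
  exact condExp_exp_mul_le_twoPointMGF (F.le k) hγ hl hΔ hΔ2
    (hbdd.mono fun ω h => (le_abs_self _).trans h) (hX.condExp_sub_ae_eq_zero k.le_succ) hvar

lemma Martingale.integrable_exp_mul_sub_and_integral_le (hX : Martingale X F μ)
    (hγ : 0 ≤ γ) (hl : 0 ≤ l) (hbdd : ∀ k, ∀ᵐ ω ∂μ, |X (k + 1) ω - X k ω| ≤ d)
    (hvar : ∀ k, ∀ᵐ ω ∂μ, μ[fun ω => (X (k + 1) ω - X k ω) ^ 2|F k] ω ≤ γ * d ^ 2) (n : ℕ) :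
    Integrable (fun ω => exp (l * (X n ω - X 0 ω))) μ ∧
      ∫ ω, exp (l * (X n ω - X 0 ω)) ∂μ ≤ twoPointMGF γ d l ^ n := by
  induction n with
  | zero => simp
  | succ k ih =>
    set S := fun ω => exp (l * (X k ω - X 0 ω))
    set E := fun ω => exp (l * (X (k + 1) ω - X k ω))
    have hsplit : (fun ω => exp (l * (X (k + 1) ω - X 0 ω))) = S * E := by
      ext ω
      rw [Pi.mul_apply, ← exp_add]
      ring_nf
    have hΔd : ∀ᵐ ω ∂μ, X (k + 1) ω - X k ω ≤ d :=
      (hbdd k).mono fun ω h => (le_abs_self _).trans h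
    have hE : Integrable E μ :=
      integrable_exp_mul_of_ae_le hl ((hX.integrable _).sub (hX.integrable _)).1 hΔd
    have hSE : Integrable (S * E) μ := ih.1.mul_bdd hE.1 (ae_norm_exp_mul_le hl hΔd)
    have hS : StronglyMeasurable[F k] S :=
      continuous_exp.comp_stronglyMeasurable <| ((hX.stronglyAdapted k).sub
        ((hX.stronglyAdapted 0).mono (F.mono k.zero_le))).const_mul l
    rw [hsplit]
    refine ⟨hSE, ?_⟩
    calc ∫ ω, S ω * E ω ∂μ ≤ twoPointMGF γ d l * ∫ ω, S ω ∂μ :=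
          integral_mul_le_of_condExp_le (F.le k) hS (.of_forall fun ω => (exp_pos _).le) ih.1 hE
            hSE (hX.condExp_exp_mul_sub_le_twoPointMGF hγ hl (hbdd k) (hvar k))
      _ ≤ twoPointMGF γ d l ^ (k + 1) := by
        rw [pow_succ']
        exact mul_le_mul_of_nonneg_left ih.2 (twoPointMGF_pos hγ).le

lemma Martingale.measure_exists_le_sub_le (hX : Martingale X F μ) (hγ : 0 ≤ γ) (hl : 0 ≤ l)
    (hbdd : ∀ k, ∀ᵐ ω ∂μ, |X (k + 1) ω - X k ω| ≤ d)
    (hvar : ∀ k, ∀ᵐ ω ∂μ, μ[fun ω => (X (k + 1) ω - X k ω) ^ 2|F k] ω ≤ γ * d ^ 2)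
    (c : ℝ) (n : ℕ) :
    μ {ω | ∃ k ≤ n, c ≤ X k ω - X 0 ω} ≤
      ENNReal.ofReal (twoPointMGF γ d l ^ n * exp (-(l * c))) := by
  have hmgf := hX.integrable_exp_mul_sub_and_integral_le hγ hl hbdd hvar
  have hY : Martingale (fun k ω => l * (X k ω - X 0 ω)) F μ :=
    (hX.sub (martingale_const_fun F μ (hX.stronglyAdapted 0) (hX.integrable 0))).smul l
  have hsub := hY.submartingale_comp_convexOn convexOn_exp continuous_exp fun k => (hmgf k).1
  calc μ {ω | ∃ k ≤ n, c ≤ X k ω - X 0 ω}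
      ≤ μ {ω | ∃ k ≤ n, exp (l * c) ≤ exp (l * (X k ω - X 0 ω))} := by
        refine measure_mono fun ω ⟨k, hk, hc⟩ => ⟨k, hk, ?_⟩
        exact exp_le_exp.2 (mul_le_mul_of_nonneg_left hc hl)
    _ ≤ ENNReal.ofReal ((∫ ω, exp (l * (X n ω - X 0 ω)) ∂μ) / exp (l * c)) :=
        hsub.measure_exists_le_le (fun _ _ => (exp_pos _).le) (exp_pos _) n
    _ ≤ ENNReal.ofReal (twoPointMGF γ d l ^ n * exp (-(l * c))) := by
        rw [exp_neg, ← div_eq_mul_inv]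
        gcongr
        exact (hmgf n).2

lemma Martingale.measure_exists_le_abs_sub_le (hX : Martingale X F μ) (hγ : 0 ≤ γ) (hl : 0 ≤ l)
    (hbdd : ∀ k, ∀ᵐ ω ∂μ, |X (k + 1) ω - X k ω| ≤ d)
    (hvar : ∀ k, ∀ᵐ ω ∂μ, μ[fun ω => (X (k + 1) ω - X k ω) ^ 2|F k] ω ≤ γ * d ^ 2)
    (c : ℝ) (n : ℕ) :
    μ {ω | ∃ k ≤ n, c ≤ |X k ω - X 0 ω|} ≤
      ENNReal.ofReal (2 * (twoPointMGF γ d l ^ n * exp (-(l * c)))) := by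
  have hneg : ∀ i j ω, (-X) i ω - (-X) j ω = -(X i ω - X j ω) := fun i j ω => by
    simp only [Pi.neg_apply]; ring
  have hX' := hX.neg.measure_exists_le_sub_le hγ hl
    (by simpa only [hneg, abs_neg] using hbdd) (by simpa only [hneg, neg_sq] using hvar) c n
  have hsplit : {ω | ∃ k ≤ n, c ≤ |X k ω - X 0 ω|} ⊆
      {ω | ∃ k ≤ n, c ≤ X k ω - X 0 ω} ∪ {ω | ∃ k ≤ n, c ≤ (-X) k ω - (-X) 0 ω} := by
    rintro ω ⟨k, hk, hc⟩
    rcases le_abs'.1 hc with h | h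
    · exact Or.inr ⟨k, hk, by rw [hneg]; linarith⟩
    · exact Or.inl ⟨k, hk, h⟩
  calc μ {ω | ∃ k ≤ n, c ≤ |X k ω - X 0 ω|}
      ≤ μ {ω | ∃ k ≤ n, c ≤ X k ω - X 0 ω} + μ {ω | ∃ k ≤ n, c ≤ (-X) k ω - (-X) 0 ω} :=
        (measure_mono hsplit).trans (measure_union_le _ _)
    _ ≤ _ := add_le_add (hX.measure_exists_le_sub_le hγ hl hbdd hvar c n) hX'
    _ = _ := by
        have hM₀ := (twoPointMGF_pos (d := d) (l := l) hγ).le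
        rw [← ENNReal.ofReal_add (by positivity) (by positivity), two_mul]

end ExponentialMoment

end MeasureTheory

lemma klBer_one (q : ℝ) : klBer 1 q = -log q := by
  simp [klBer, log_inv]

/-- The minimiser `l` of `l ↦ twoPointMGF γ d l * exp (-(l * (δ * d)))` solves
`exp ((1 + γ) * l * d) = (δ + γ) / (γ * (1 - δ))`. -/
lemma exists_twoPointMGF_mul_exp_eq_exp_neg_klBer {γ d δ : ℝ} (hγ : 0 < γ) (hd : 0 < d)
    (hδ₀ : 0 ≤ δ) (hδ₁ : δ < 1) :
    ∃ l, 0 ≤ l ∧ twoPointMGF γ d l * exp (-(l * (δ * d))) =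
      exp (-klBer ((δ + γ) / (1 + γ)) (γ / (1 + γ))) := by
  have h1δ : 0 < 1 - δ := by linarith
  set s := (δ + γ) / (γ * (1 - δ))
  have hγs : γ * s * (1 - δ) = δ + γ := by
    simp only [s]
    field_simp
  have hs : 1 ≤ s := by
    rw [le_div_iff₀ (by positivity)]
    nlinarith
  set t := log s / (1 + γ)
  have hlog_s : log s = log (δ + γ) - log γ - log (1 - δ) := by
    rw [log_div (by positivity) (by positivity), log_mul hγ.ne' h1δ.ne']
    ring
  have ht : (1 + γ) * t = log s := mul_div_cancel₀ _ (by positivity)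
  have hexp_t : exp t = exp (-(γ * t)) * s := by
    rw [← exp_log (zero_lt_one.trans_le hs), ← exp_add]
    congr 1
    linear_combination ht
  refine ⟨t / d, div_nonneg (div_nonneg (log_nonneg hs) (by positivity)) hd.le, ?_⟩
  have hM : twoPointMGF γ d (t / d) = exp (-(γ * t) - log (1 - δ)) := by
    rw [twoPointMGF, exp_sub, exp_log h1δ, div_mul_cancel₀ t hd.ne',
      show -(t / d * γ * d) = -(γ * t) by field_simp, hexp_t]
    field_simp
    linear_combination hγs
  rw [hM, ← exp_add]
  congr 1
  have hγ1 : 1 + γ ≠ 0 := by positivity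
  rw [klBer, show (δ + γ) / (1 + γ) / (γ / (1 + γ)) = (δ + γ) / γ by field_simp,
    show (1 - (δ + γ) / (1 + γ)) / (1 - γ / (1 + γ)) = 1 - δ by field_simp; ring,
    log_div (by positivity) hγ.ne']
  simp only [t, hlog_s]
  field_simp
  ring

lemma tendsto_twoPointMGF_mul_exp_neg {γ d : ℝ} (hγ : 0 ≤ γ) (hd : 0 < d) :
    Tendsto (fun l => twoPointMGF γ d l * exp (-(l * d))) atTop (𝓝 (γ / (1 + γ))) := by
  have hc : 0 < (1 + γ) * d := by positivity
  have hdecay : Tendsto (fun l => exp (-(l * ((1 + γ) * d)))) atTop (𝓝 0) :=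
    tendsto_exp_neg_atTop_nhds_zero.comp (tendsto_id.atTop_mul_const hc)
  have h := (hdecay.const_mul (1 / (1 + γ))).const_add (γ / (1 + γ))
  rw [mul_zero, add_zero] at h
  refine h.congr fun l => ?_
  have hcancel : exp (l * d) * exp (-(l * d)) = 1 := by rw [← exp_add]; simp
  have hmerge : exp (-(l * γ * d)) * exp (-(l * d)) = exp (-(l * ((1 + γ) * d))) := by
    rw [← exp_add]; ring_nf
  rw [twoPointMGF, add_mul _ _ (exp (-(l * d))), mul_assoc (γ / (1 + γ)), hcancel,
    mul_assoc (1 / (1 + γ)), hmerge, mul_one]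

lemma le_ofReal_two_mul_exp_neg_klBer {P : ℝ≥0∞} {γ d α : ℝ} (hγ : 0 < γ) (hd : 0 < d)
    (hα : 0 ≤ α) (hαd : α / d ≤ 1) (n : ℕ)
    (h : ∀ l, 0 ≤ l →
      P ≤ ENNReal.ofReal (2 * (twoPointMGF γ d l ^ n * exp (-(l * (α * n)))))) :
    P ≤ ENNReal.ofReal (2 * exp (-(n : ℝ) * klBer ((α / d + γ) / (1 + γ)) (γ / (1 + γ)))) := by
  have hpow : ∀ l, twoPointMGF γ d l ^ n * exp (-(l * (α * n))) =
      (twoPointMGF γ d l * exp (-(l * (α / d * d)))) ^ n := fun l => by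
    rw [div_mul_cancel₀ α hd.ne', mul_pow, ← exp_nat_mul]
    ring_nf
  simp only [hpow] at h
  rcases hαd.lt_or_eq with hlt | heq
  · obtain ⟨l, hl, hopt⟩ :=
      exists_twoPointMGF_mul_exp_eq_exp_neg_klBer hγ hd (div_nonneg hα hd.le) hlt
    refine (h l hl).trans_eq ?_
    rw [hopt, ← exp_nat_mul]
    ring_nf
  · have hq : 0 < γ / (1 + γ) := by positivity
    rw [heq, div_self (by positivity), klBer_one, neg_mul_neg, exp_nat_mul, exp_log hq]
    refine ge_of_tendsto ((ENNReal.continuous_ofReal.tendsto _).comp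
      (((tendsto_twoPointMGF_mul_exp_neg hγ.le hd).pow n).const_mul 2)) ?_
    filter_upwards [eventually_ge_atTop 0] with l hl
    rw [Function.comp_apply]
    simpa only [heq, one_mul] using h l hl

theorem martingale_bounded_jumps_divergence_bound_general
    {Ω : Type*} {m0 : MeasurableSpace Ω} {μ : Measure Ω} [IsProbabilityMeasure μ]
    {F : Filtration ℕ m0} {X : ℕ → Ω → ℝ}
    (hmart : Martingale X F μ)
    {d σ : ℝ} (hd : 0 < d) (hσ : 0 < σ)
    (hbdd : ∀ k : ℕ, 1 ≤ k → ∀ᵐ ω ∂μ, |X k ω - X (k - 1) ω| ≤ d)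
    (hvar : ∀ k : ℕ, 1 ≤ k → ∀ᵐ ω ∂μ,
      (μ[fun ω => (X k ω - X (k - 1) ω) ^ 2 | F (k - 1)]) ω ≤ σ ^ 2)
    {α : ℝ} (hα : 0 ≤ α) (hδ : α / d ≤ 1) (n : ℕ) :
    μ {ω | ∃ k, 1 ≤ k ∧ k ≤ n ∧ α * n ≤ |X k ω - X 0 ω|}
      ≤ ENNReal.ofReal (2 * Real.exp (-(n : ℝ) *
          klBer ((α / d + σ ^ 2 / d ^ 2) / (1 + σ ^ 2 / d ^ 2))
            ((σ ^ 2 / d ^ 2) / (1 + σ ^ 2 / d ^ 2)))) := by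
  set γ := σ ^ 2 / d ^ 2
  have hγ : 0 < γ := by positivity
  have hσγ : σ ^ 2 = γ * d ^ 2 := (div_mul_cancel₀ _ (by positivity)).symm
  have hbdd' (k : ℕ) : ∀ᵐ ω ∂μ, |X (k + 1) ω - X k ω| ≤ d := by
    simpa using hbdd (k + 1) k.succ_pos
  have hvar' (k : ℕ) : ∀ᵐ ω ∂μ, μ[fun ω => (X (k + 1) ω - X k ω) ^ 2|F k] ω ≤ γ * d ^ 2 := by
    simpa [hσγ] using hvar (k + 1) k.succ_pos
  refine le_ofReal_two_mul_exp_neg_klBer hγ hd hα hδ n fun l hl => ?_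
  refine (measure_mono ?_).trans (hmart.measure_exists_le_abs_sub_le hγ.le hl hbdd' hvar' _ n)
  exact fun ω ⟨k, _, hk, h⟩ => ⟨k, hk, h⟩

/-- Theorem 2 (McDiarmid): exponential bound for martingales with bounded jumps and
bounded conditional variance, without the conditional symmetry assumption. -/
theorem martingale_bounded_jumps_divergence_bound
    {Ω : Type*} {m0 : MeasurableSpace Ω} {μ : Measure Ω} [IsProbabilityMeasure μ]
    {F : Filtration ℕ m0} {X : ℕ → Ω → ℝ}
    (hmart : Martingale X F μ)
    {d σ : ℝ} (hd : 0 < d) (hσ : 0 < σ)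
    (hbdd : ∀ k : ℕ, 1 ≤ k → ∀ᵐ ω ∂μ, |X k ω - X (k - 1) ω| ≤ d)
    (hvar : ∀ k : ℕ, 1 ≤ k → ∀ᵐ ω ∂μ,
      (μ[fun ω => (X k ω - X (k - 1) ω) ^ 2 | F (k - 1)]) ω ≤ σ ^ 2)
    {α : ℝ} (hα : 0 ≤ α) (hδ : α / d ≤ 1) (n : ℕ) (hn : 1 ≤ n) :
    μ {ω | ∃ k, 1 ≤ k ∧ k ≤ n ∧ α * n ≤ |X k ω - X 0 ω|}
      ≤ ENNReal.ofReal (2 * Real.exp (-(n : ℝ) *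
          klBer ((α / d + σ ^ 2 / d ^ 2) / (1 + σ ^ 2 / d ^ 2))
            ((σ ^ 2 / d ^ 2) / (1 + σ ^ 2 / d ^ 2)))) :=
  martingale_bounded_jumps_divergence_bound_general hmart hd hσ hbdd hvar hα hδ n
end

section
/- Let {X_n, F_n}_{n≥0} be a discrete-time real-valued conditionally symmetric supermartingale, and let η_k = X_k − E[X_k | F_{k−1}]. Assume η_k ≤ d almost surely for every k ≥ 1, for some fixed d > 0, and let Q_n = Σ_{k=1}^n E[η_k² | F_{k−1}] (with Q_0 = 0). Then for every z, r > 0, P( max_{1≤k≤n} (X_k − X_0) ≥ z and Q_n ≤ r for some n ≥ 1 ) ≤ exp( −(z²/(2r)) · C(zd/r) ), where C(u) = 2[u·arcsinh(u) − √(1+u²) + 1]/u² for u > 0. -/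
/-!
Let `S_n = ∑_{k ≤ n} η_k` and let `Q_n` be the predictable quadratic variation. Conditional
symmetry forces `|η_k| ≤ d` and turns `E[exp (λ η_k) | F_{k-1}]` into `E[cosh (λ η_k) | F_{k-1}]`.
Since `(cosh t - 1) / t²` increases with `|t|`, this is at most
`1 + c E[η_k² | F_{k-1}] ≤ exp (c E[η_k² | F_{k-1}])` with `c = (cosh (λ d) - 1) / d²`, so
`exp (λ S_n - c Q_n)` is a nonnegative supermartingale started at `1`, and Ville's maximal
inequality bounds the probability that it ever reaches `exp (λ z - c r)` by `exp (c r - λ z)`.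
The supermartingale property gives `X_k - X_0 ≤ S_k` and `Q` is nondecreasing, so the event of
the theorem lies in that one; `λ = arsinh (z d / r) / d` optimises the exponent.
-/

open MeasureTheory ProbabilityTheory Filter Set

/-- The function `C(u) = 2[u·arcsinh(u) − √(1+u²) + 1]/u²` for `u > 0`. -/
noncomputable def Cfun (u : ℝ) : ℝ :=
  2 * (u * Real.arsinh u - Real.sqrt (1 + u ^ 2) + 1) / u ^ 2

namespace Real

lemma convexOn_sinh : ConvexOn ℝ (Ici 0) sinh :=
  MonotoneOn.convexOn_of_deriv (convex_Ici 0) continuous_sinh.continuousOn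
    differentiable_sinh.differentiableOn
    (by
      rw [deriv_sinh, interior_Ici]
      exact cosh_strictMonoOn.monotoneOn.mono Ioi_subset_Ici_self)

lemma sinh_mul_le_sinh_mul {s t : ℝ} (hs : 0 ≤ s) (hst : s ≤ t) : sinh s * t ≤ s * sinh t := by
  rcases hs.eq_or_lt with rfl | hs
  · simp
  have ht : 0 < t := hs.trans_le hst
  -- `s` is a convex combination of `0` and `t`, and `sinh 0 = 0`
  have h := convexOn_sinh.2 (mem_Ici.2 le_rfl) (mem_Ici.2 ht.le)
    (div_nonneg (sub_nonneg.2 hst) ht.le) (div_nonneg hs.le ht.le)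
    (by field_simp; ring)
  simp only [smul_eq_mul, mul_zero, zero_add, sinh_zero, div_mul_cancel₀ s ht.ne'] at h
  rwa [div_mul_eq_mul_div, le_div_iff₀ ht] at h

lemma cosh_sub_one_eq (x : ℝ) : cosh x - 1 = 2 * sinh (x / 2) ^ 2 := by
  have h := cosh_two_mul (x / 2)
  rw [mul_div_cancel₀ x two_ne_zero] at h
  nlinarith [cosh_sq (x / 2)]

lemma cosh_sub_one_mul_sq_le {x y : ℝ} (h : |x| ≤ |y|) :
    (cosh x - 1) * y ^ 2 ≤ (cosh y - 1) * x ^ 2 := by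
  have hs := sinh_mul_le_sinh_mul (by positivity : 0 ≤ |x| / 2) (by linarith : |x| / 2 ≤ |y| / 2)
  have hx0 : 0 ≤ sinh (|x| / 2) := sinh_nonneg_iff.2 (by positivity)
  have hy0 : 0 ≤ sinh (|y| / 2) := sinh_nonneg_iff.2 (by positivity)
  rw [← cosh_abs x, ← cosh_abs y, cosh_sub_one_eq, cosh_sub_one_eq, ← sq_abs x, ← sq_abs y]
  have := mul_le_mul hs hs (by positivity) (by positivity)
  nlinarith

lemma cosh_mul_sub_one_le (l : ℝ) {x d : ℝ} (hx : |x| ≤ d) :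
    cosh (l * x) - 1 ≤ (cosh (l * d) - 1) / d ^ 2 * x ^ 2 := by
  rcases eq_or_ne (l * d) 0 with hld | hld
  · have hlx : l * x = 0 := by
      rcases mul_eq_zero.1 hld with rfl | rfl
      · exact zero_mul x
      · rw [abs_nonpos_iff.1 hx, mul_zero]
    simp [hlx, hld]
  have hd : 0 ≤ d := (abs_nonneg x).trans hx
  have h := cosh_sub_one_mul_sq_le (x := l * x) (y := l * d) (by
    rw [abs_mul, abs_mul, abs_of_nonneg hd]; exact mul_le_mul_of_nonneg_left hx (abs_nonneg l))
  have hl : 0 < l ^ 2 := by have := left_ne_zero_of_mul hld; positivity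
  have hd2 : 0 < d ^ 2 := by have := right_ne_zero_of_mul hld; positivity
  rw [div_mul_eq_mul_div, le_div_iff₀ hd2]
  refine le_of_mul_le_mul_left ?_ hl
  linear_combination h

end Real

namespace MeasureTheory

variable {Ω : Type*} {m0 : MeasurableSpace Ω} {μ : Measure Ω} {F : Filtration ℕ m0}
  {M : ℕ → Ω → ℝ}

theorem Supermartingale.maximal_ineq [IsFiniteMeasure μ]
    (hM : Supermartingale M F μ) (hnonneg : 0 ≤ M) (a : ℝ) (n : ℕ) :
    a * μ.real {ω | ∃ k ≤ n, a ≤ M k ω} ≤ μ[M 0] := by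
  set π : Ω → ℕ∞ := fun ω => (hittingBtwn M {y | a ≤ y} 0 n ω : ℕ)
  have hπ : IsStoppingTime F π :=
    hM.stronglyAdapted.adapted.isStoppingTime_hittingBtwn measurableSet_Ici
  have hπn : ∀ ω, π ω ≤ n := fun ω => WithTop.coe_le_coe.2 (hittingBtwn_le ω)
  have hint : Integrable (stoppedValue M π) μ := integrable_stoppedValue ℕ hπ hM.integrable hπn
  have hA : MeasurableSet {ω | ∃ k ≤ n, a ≤ M k ω} := by
    simp only [ofPred_exists]
    exact MeasurableSet.iUnion fun k => (MeasurableSet.const (k ≤ n)).inter <|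
      measurableSet_le measurable_const ((hM.stronglyMeasurable k).measurable.le (F.le k))
  have hge : ∀ ω ∈ {ω | ∃ k ≤ n, a ≤ M k ω}, a ≤ stoppedValue M π ω := by
    rintro ω ⟨k, hk, hak⟩
    exact stoppedValue_hittingBtwn_mem ⟨k, ⟨Nat.zero_le k, hk⟩, hak⟩
  have hstop : μ[stoppedValue M π] ≤ μ[M 0] := by
    have := hM.neg.expected_stoppedValue_mono (isStoppingTime_const F 0) hπ
      (fun ω => bot_le) hπn
    simpa [stoppedValue, integral_neg] using this
  calc a * μ.real {ω | ∃ k ≤ n, a ≤ M k ω}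
      ≤ ∫ ω in {ω | ∃ k ≤ n, a ≤ M k ω}, stoppedValue M π ω ∂μ :=
        setIntegral_ge_of_const_le_real hA (measure_ne_top _ _) hge hint.integrableOn
    _ ≤ μ[stoppedValue M π] := setIntegral_le_integral hint (ae_of_all _ fun ω => hnonneg _ ω)
    _ ≤ μ[M 0] := hstop

theorem Supermartingale.measure_exists_ge_le [IsFiniteMeasure μ]
    (hM : Supermartingale M F μ) (hnonneg : 0 ≤ M) {a : ℝ} (ha : 0 < a) :
    μ {ω | ∃ k, a ≤ M k ω} ≤ ENNReal.ofReal (μ[M 0] / a) := by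
  have hunion : {ω | ∃ k, a ≤ M k ω} = ⋃ n, {ω | ∃ k ≤ n, a ≤ M k ω} := by
    ext ω
    simp only [mem_ofPred_eq, mem_iUnion]
    exact ⟨fun ⟨k, hk⟩ => ⟨k, k, le_rfl, hk⟩, fun ⟨_, k, _, hk⟩ => ⟨k, hk⟩⟩
  have hmono : Monotone fun n => {ω | ∃ k ≤ n, a ≤ M k ω} :=
    fun n n' hnn' ω ⟨k, hk, hak⟩ => ⟨k, hk.trans hnn', hak⟩
  rw [hunion, hmono.measure_iUnion]
  refine iSup_le fun n => ?_
  rw [← ofReal_measureReal]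
  refine ENNReal.ofReal_le_ofReal ?_
  rw [le_div_iff₀ ha, mul_comm]
  exact hM.maximal_ineq hnonneg a n

end MeasureTheory

namespace ProbabilityTheory

def CondSymmetric {Ω : Type*} (m : MeasurableSpace Ω) {m0 : MeasurableSpace Ω}
    (μ : Measure[m0] Ω) (η : Ω → ℝ) : Prop :=
  ∀ g : ℝ → ℝ, Measurable g → μ[fun ω => g (η ω) | m] =ᵐ[μ] μ[fun ω => g (-η ω) | m]

section CondSymmetric

variable {Ω : Type*} {m m0 : MeasurableSpace Ω} {μ : Measure Ω} {η : Ω → ℝ} [IsFiniteMeasure μ]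

lemma CondSymmetric.identDistrib_neg (h : CondSymmetric m μ η) (hm : m ≤ m0)
    (hη : Measurable η) : IdentDistrib η (-η) μ μ := by
  refine ⟨hη.aemeasurable, hη.neg.aemeasurable, Measure.ext fun s hs => ?_⟩
  rw [Measure.map_apply hη hs, Measure.map_apply hη.neg hs, ← ofReal_measureReal,
    ← ofReal_measureReal]
  congr 1
  have hg : Measurable (s.indicator fun _ => (1 : ℝ)) := measurable_const.indicator hs
  calc μ.real (η ⁻¹' s) = ∫ ω, s.indicator (fun _ => (1 : ℝ)) (η ω) ∂μ :=
        (integral_indicator_one (hη hs)).symm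
    _ = ∫ ω, s.indicator (fun _ => (1 : ℝ)) (-η ω) ∂μ := by
        rw [← integral_condExp hm, ← integral_condExp hm (f := fun ω => s.indicator _ (-η ω))]
        exact integral_congr_ae (h _ hg)
    _ = μ.real ((-η) ⁻¹' s) := integral_indicator_one (hη.neg hs)

lemma CondSymmetric.ae_abs_le (h : CondSymmetric m μ η) (hm : m ≤ m0) (hη : Measurable η)
    {d : ℝ} (hbdd : ∀ᵐ ω ∂μ, η ω ≤ d) : ∀ᵐ ω ∂μ, |η ω| ≤ d := by
  -- `η` and `-η` have the same law, so `{η < -d}` is as likely as the null set `{d < η}`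
  have hlow : ∀ᵐ ω ∂μ, -d ≤ η ω := by
    rw [ae_iff] at hbdd ⊢
    have := (h.identDistrib_neg hm hη).measure_mem_eq (measurableSet_Iio (a := -d))
    simp only [not_le] at hbdd ⊢
    rw [← hbdd]
    convert this using 2 <;> ext ω <;> simp [neg_lt_neg_iff]
  filter_upwards [hbdd, hlow] with ω hup hlo
  exact abs_le.2 ⟨hlo, hup⟩

lemma CondSymmetric.condExp_exp_mul_le (h : CondSymmetric m μ η) (hm : m ≤ m0)
    (hη : AEMeasurable η μ) {d : ℝ} (hbdd : ∀ᵐ ω ∂μ, |η ω| ≤ d) (l : ℝ) :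
    μ[fun ω => Real.exp (l * η ω) | m]
      ≤ᵐ[μ] fun ω => Real.exp ((Real.cosh (l * d) - 1) / d ^ 2 * μ[fun ω => η ω ^ 2 | m] ω) := by
  set c := (Real.cosh (l * d) - 1) / d ^ 2
  have hIcc : ∀ᵐ ω ∂μ, η ω ∈ Icc (-d) d := by
    filter_upwards [hbdd] with ω hω using abs_le.1 hω
  have hexp : Integrable (fun ω => Real.exp (l * η ω)) μ := integrable_exp_mul_of_mem_Icc hη hIcc
  have hexp_neg : Integrable (fun ω => Real.exp (l * -η ω)) μ := by
    refine integrable_exp_mul_of_mem_Icc (a := -d) (b := d) hη.neg ?_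
    filter_upwards [hIcc] with ω hω using ⟨neg_le_neg hω.2, neg_le.1 hω.1⟩
  have hsq : Integrable (fun ω => η ω ^ 2) μ := by
    refine Integrable.of_mem_Icc 0 (d ^ 2) (hη.pow_const 2) ?_
    filter_upwards [hbdd] with ω hω
    exact ⟨sq_nonneg _, by rw [← sq_abs]; exact pow_le_pow_left₀ (abs_nonneg _) hω 2⟩
  -- symmetry turns `exp (l η)` into `cosh (l η)`, which is at most `1 + c η²`
  have hsymm := h (fun x => Real.exp (l * x)) (by fun_prop)
  have hsum := condExp_add hexp hexp_neg m
  have hbound : μ[(fun ω => Real.exp (l * η ω)) + fun ω => Real.exp (l * -η ω) | m]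
      ≤ᵐ[μ] μ[(fun _ => (2 : ℝ)) + (2 * c) • fun ω => η ω ^ 2 | m] := by
    refine condExp_mono (hexp.add hexp_neg) ((integrable_const _).add (hsq.smul _)) ?_
    filter_upwards [hbdd] with ω hω
    have hcosh := Real.cosh_mul_sub_one_le l hω
    rw [Real.cosh_eq] at hcosh
    simp only [Pi.add_apply, Pi.smul_apply, smul_eq_mul, mul_neg]
    linarith
  have hlin := (condExp_add (integrable_const (2 : ℝ)) (hsq.smul (2 * c)) m).trans
    (EventuallyEq.rfl.add (condExp_smul (2 * c) (fun ω => η ω ^ 2) m))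
  filter_upwards [hsymm, hsum, hbound, hlin] with ω hsymm hsum hbound hlin
  simp only [Pi.add_apply, Pi.smul_apply, smul_eq_mul, condExp_const hm] at hsum hbound hlin
  have := Real.add_one_le_exp (c * μ[fun ω => η ω ^ 2 | m] ω)
  linarith

end CondSymmetric

section Innovation

variable {Ω : Type*} {m0 : MeasurableSpace Ω} {μ : Measure Ω} {F : Filtration ℕ m0}
  {X : ℕ → Ω → ℝ}

noncomputable def innovation (μ : Measure Ω) (F : Filtration ℕ m0) (X : ℕ → Ω → ℝ) (k : ℕ) :
    Ω → ℝ :=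
  fun ω => X k ω - μ[X k | F (k - 1)] ω

lemma stronglyAdapted_innovation (hX : StronglyAdapted F X) :
    StronglyAdapted F (innovation μ F X) := fun k =>
  (hX k).sub (stronglyMeasurable_condExp.mono (F.mono (Nat.sub_le k 1)))

lemma _root_.MeasureTheory.Supermartingale.ae_sub_le_sum_innovation
    (hX : Supermartingale X F μ) :
    ∀ᵐ ω ∂μ, ∀ n, X n ω - X 0 ω ≤ ∑ k ∈ Finset.Icc 1 n, innovation μ F X k ω := by
  have hstep : ∀ᵐ ω ∂μ, ∀ k, μ[X (k + 1) | F k] ω ≤ X k ω :=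
    ae_all_iff.2 fun k => hX.condExp_ae_le k.le_succ
  filter_upwards [hstep] with ω hω n
  induction n with
  | zero => simp
  | succ n ih =>
    rw [Finset.sum_Icc_succ_top (Nat.le_add_left 1 n)]
    have := hω n
    simp only [innovation, Nat.add_sub_cancel] at ih ⊢
    linarith

end Innovation

section ExpProcess

variable {Ω : Type*} {m0 : MeasurableSpace Ω}

noncomputable def predQuadVar (μ : Measure Ω) (F : Filtration ℕ m0) (η : ℕ → Ω → ℝ) (n : ℕ) :
    Ω → ℝ :=
  fun ω => ∑ k ∈ Finset.Icc 1 n, μ[fun ω => η k ω ^ 2 | F (k - 1)] ω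

noncomputable def expProcess (μ : Measure Ω) (F : Filtration ℕ m0) (η : ℕ → Ω → ℝ) (l c : ℝ)
    (n : ℕ) : Ω → ℝ :=
  fun ω => Real.exp (l * ∑ k ∈ Finset.Icc 1 n, η k ω - c * predQuadVar μ F η n ω)

variable {μ : Measure Ω} {F : Filtration ℕ m0} {η : ℕ → Ω → ℝ}

lemma predQuadVar_zero : predQuadVar μ F η 0 = 0 := by
  ext ω; simp [predQuadVar]

lemma predQuadVar_succ (n : ℕ) :
    predQuadVar μ F η (n + 1) = predQuadVar μ F η n + μ[fun ω => η (n + 1) ω ^ 2 | F n] := by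
  ext ω; exact Finset.sum_Icc_succ_top (Nat.le_add_left 1 n) _

lemma stronglyAdapted_predQuadVar : StronglyAdapted F (predQuadVar μ F η) := fun _ =>
  Finset.stronglyMeasurable_fun_sum _ fun k hk =>
    stronglyMeasurable_condExp.mono (F.mono ((Nat.sub_le k 1).trans (Finset.mem_Icc.1 hk).2))

lemma ae_monotone_predQuadVar : ∀ᵐ ω ∂μ, Monotone fun n => predQuadVar μ F η n ω := by
  have hnonneg : ∀ᵐ ω ∂μ, ∀ k, 0 ≤ μ[fun ω => η k ω ^ 2 | F (k - 1)] ω :=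
    ae_all_iff.2 fun k => condExp_nonneg (ae_of_all _ fun ω => sq_nonneg _)
  filter_upwards [hnonneg] with ω hω n n' hnn'
  exact Finset.sum_le_sum_of_subset_of_nonneg (Finset.Icc_subset_Icc_right hnn')
    fun k _ _ => hω k

lemma expProcess_zero (l c : ℝ) : expProcess μ F η l c 0 = 1 := by
  ext ω; simp [expProcess, predQuadVar_zero]

lemma expProcess_succ (l c : ℝ) (n : ℕ) :
    expProcess μ F η l c (n + 1) =
      (fun ω => expProcess μ F η l c n ω * Real.exp (-c * μ[fun ω => η (n + 1) ω ^ 2 | F n] ω))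
        * fun ω => Real.exp (l * η (n + 1) ω) := by
  ext ω
  simp only [expProcess, predQuadVar_succ, Finset.sum_Icc_succ_top (Nat.le_add_left 1 n),
    Pi.add_apply, Pi.mul_apply, ← Real.exp_add]
  ring_nf

lemma stronglyAdapted_expProcess (hη : StronglyAdapted F η) (l c : ℝ) :
    StronglyAdapted F (expProcess μ F η l c) := fun n =>
  Real.continuous_exp.comp_stronglyMeasurable <|
    ((Finset.stronglyMeasurable_fun_sum _ fun k hk =>
      (hη k).mono (F.mono (Finset.mem_Icc.1 hk).2)).const_mul l).sub
    ((stronglyAdapted_predQuadVar n).const_mul c)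

variable [IsFiniteMeasure μ]

lemma integrable_expProcess (hη : StronglyAdapted F η) {d : ℝ}
    (hbdd : ∀ k, 1 ≤ k → ∀ᵐ ω ∂μ, |η k ω| ≤ d) (l : ℝ) {c : ℝ} (hc : 0 ≤ c) (n : ℕ) :
    Integrable (expProcess μ F η l c n) μ := by
  refine .of_mem_Icc 0 (Real.exp (n * (|l| * d)))
    ((stronglyAdapted_expProcess hη l c n).mono (F.le n)).measurable.aemeasurable ?_
  have hη_ae : ∀ᵐ ω ∂μ, ∀ k ∈ Finset.Icc 1 n, |η k ω| ≤ d :=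
    (eventually_all_finset _).2 fun k hk => hbdd k (Finset.mem_Icc.1 hk).1
  filter_upwards [hη_ae, ae_monotone_predQuadVar (μ := μ) (F := F) (η := η)] with ω hω hQ
  have hsum : l * ∑ k ∈ Finset.Icc 1 n, η k ω ≤ n * (|l| * d) := by
    rw [Finset.mul_sum]
    refine (Finset.sum_le_card_nsmul _ _ (|l| * d) fun k hk => ?_).trans_eq (by simp)
    exact (le_abs_self _).trans (abs_mul l _ ▸ mul_le_mul_of_nonneg_left (hω k hk) (abs_nonneg l))
  have hQ0 : 0 ≤ predQuadVar μ F η n ω := by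
    simpa [predQuadVar_zero] using hQ (Nat.zero_le n)
  exact ⟨(Real.exp_pos _).le, Real.exp_le_exp.2 (by nlinarith)⟩

theorem supermartingale_expProcess (hη : StronglyAdapted F η)
    (hsymm : ∀ k, 1 ≤ k → CondSymmetric (F (k - 1)) μ (η k)) {d : ℝ}
    (hbdd : ∀ k, 1 ≤ k → ∀ᵐ ω ∂μ, |η k ω| ≤ d) (l : ℝ) :
    Supermartingale (expProcess μ F η l ((Real.cosh (l * d) - 1) / d ^ 2)) F μ := by
  set c := (Real.cosh (l * d) - 1) / d ^ 2
  have hc : 0 ≤ c := div_nonneg (sub_nonneg.2 (Real.one_le_cosh _)) (sq_nonneg d)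
  refine supermartingale_nat (stronglyAdapted_expProcess hη l c)
    (integrable_expProcess hη hbdd l hc) fun n => ?_
  set q := μ[fun ω => η (n + 1) ω ^ 2 | F n]
  have hG : StronglyMeasurable[F n] fun ω => expProcess μ F η l c n ω * Real.exp (-c * q ω) :=
    (stronglyAdapted_expProcess hη l c n).mul
      (Real.continuous_exp.comp_stronglyMeasurable (stronglyMeasurable_condExp.const_mul _))
  have hη_meas : AEMeasurable (η (n + 1)) μ := ((hη (n + 1)).mono (F.le _)).measurable.aemeasurable
  have hE : Integrable (fun ω => Real.exp (l * η (n + 1) ω)) μ :=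
    integrable_exp_mul_of_mem_Icc hη_meas <| by
      filter_upwards [hbdd (n + 1) n.succ_pos] with ω hω using abs_le.1 hω
  have hmgf := (hsymm (n + 1) n.succ_pos).condExp_exp_mul_le (F.le n) hη_meas
    (hbdd (n + 1) n.succ_pos) l
  rw [expProcess_succ]
  filter_upwards [condExp_mul_of_stronglyMeasurable_left hG
    (expProcess_succ (μ := μ) (F := F) l c n ▸ integrable_expProcess hη hbdd l hc (n + 1)) hE,
    hmgf] with ω hpull hω
  rw [hpull, Pi.mul_apply, mul_assoc]
  calc expProcess μ F η l c n ω
        * (Real.exp (-c * q ω) * μ[fun ω => Real.exp (l * η (n + 1) ω) | F n] ω)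
      ≤ expProcess μ F η l c n ω * (Real.exp (-c * q ω) * Real.exp (c * q ω)) :=
        mul_le_mul_of_nonneg_left (mul_le_mul_of_nonneg_left hω (Real.exp_pos _).le)
          (Real.exp_pos _).le
    _ = expProcess μ F η l c n ω := by
        rw [← Real.exp_add, neg_mul, neg_add_cancel, Real.exp_zero, mul_one]

end ExpProcess

end ProbabilityTheory

lemma freedman_exponent_eq {z r d : ℝ} (hz : 0 < z) (hr : 0 < r) (hd : 0 < d) :
    Real.arsinh (z * d / r) / d * z
        - (Real.cosh (Real.arsinh (z * d / r) / d * d) - 1) / d ^ 2 * r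
      = z ^ 2 / (2 * r) * Cfun (z * d / r) := by
  have hu : 0 < z * d / r := by positivity
  rw [div_mul_cancel₀ _ hd.ne', Real.cosh_arsinh, Cfun]
  field_simp
  ring

/-- Corollary (supermartingale case): Freedman-type inequality for conditionally symmetric
supermartingales with `η_k = X_k − E[X_k | F_{k−1}] ≤ d` a.s., in terms of the predictable
quadratic variation `Q_n = Σ_{k=1}^n E[η_k² | F_{k−1}]`. -/
theorem conditionally_symmetric_supermartingale_freedman_bound
    {Ω : Type*} {m0 : MeasurableSpace Ω} {μ : Measure Ω} [IsProbabilityMeasure μ]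
    {F : Filtration ℕ m0} {X : ℕ → Ω → ℝ}
    (hsuper : Supermartingale X F μ)
    (hsymm : ∀ k : ℕ, 1 ≤ k → ∀ g : ℝ → ℝ, Measurable g →
      μ[fun ω => g (X k ω - (μ[X k | F (k - 1)]) ω) | F (k - 1)]
        =ᵐ[μ] μ[fun ω => g (-(X k ω - (μ[X k | F (k - 1)]) ω)) | F (k - 1)])
    {d : ℝ} (hd : 0 < d)
    (hbdd : ∀ k : ℕ, 1 ≤ k → ∀ᵐ ω ∂μ, X k ω - (μ[X k | F (k - 1)]) ω ≤ d)
    {z r : ℝ} (hz : 0 < z) (hr : 0 < r) :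
    μ {ω | ∃ n : ℕ, 1 ≤ n ∧ (∃ k, 1 ≤ k ∧ k ≤ n ∧ z ≤ X k ω - X 0 ω) ∧
        (∑ k ∈ Finset.Icc 1 n,
          (μ[fun ω' => (X k ω' - (μ[X k | F (k - 1)]) ω') ^ 2 | F (k - 1)]) ω) ≤ r}
      ≤ ENNReal.ofReal (Real.exp (-(z ^ 2 / (2 * r)) * Cfun (z * d / r))) := by
  set η := innovation μ F X
  have hη : StronglyAdapted F η := stronglyAdapted_innovation hsuper.stronglyAdapted
  have hη_symm : ∀ k, 1 ≤ k → CondSymmetric (F (k - 1)) μ (η k) := hsymm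
  have habs : ∀ k, 1 ≤ k → ∀ᵐ ω ∂μ, |η k ω| ≤ d := fun k hk =>
    (hη_symm k hk).ae_abs_le (F.le _) ((hη k).mono (F.le k)).measurable (hbdd k hk)
  -- the minimiser over `l` of `c r - l z`, with `c = (cosh (l d) - 1) / d²` as below
  set l := Real.arsinh (z * d / r) / d
  set c := (Real.cosh (l * d) - 1) / d ^ 2
  have hl : 0 ≤ l := div_nonneg (Real.arsinh_nonneg_iff.2 (by positivity)) hd.le
  have hc : 0 ≤ c := div_nonneg (sub_nonneg.2 (Real.one_le_cosh _)) (sq_nonneg d)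
  have hevent : ∀ᵐ ω ∂μ, (∃ n : ℕ, 1 ≤ n ∧ (∃ k, 1 ≤ k ∧ k ≤ n ∧ z ≤ X k ω - X 0 ω) ∧
      predQuadVar μ F η n ω ≤ r) → ∃ k, Real.exp (l * z - c * r) ≤ expProcess μ F η l c k ω := by
    filter_upwards [hsuper.ae_sub_le_sum_innovation, ae_monotone_predQuadVar] with ω hS hQ
    rintro ⟨n, -, ⟨k, -, hkn, hzk⟩, hQn⟩
    refine ⟨k, Real.exp_le_exp.2 ?_⟩
    nlinarith [hS k, hQ hkn]
  calc _ ≤ μ {ω | ∃ k, Real.exp (l * z - c * r) ≤ expProcess μ F η l c k ω} :=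
        measure_mono_ae hevent
    _ ≤ ENNReal.ofReal (μ[expProcess μ F η l c 0] / Real.exp (l * z - c * r)) :=
        (supermartingale_expProcess hη hη_symm habs l).measure_exists_ge_le
          (fun _ _ => (Real.exp_pos _).le) (Real.exp_pos _)
    _ = _ := by
        rw [expProcess_zero, Pi.one_def, integral_const, probReal_univ, one_smul, one_div,
          ← Real.exp_neg, freedman_exponent_eq hz hr hd, neg_mul]
end
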